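/- Let n ≥ 1, let π ∈ S_NC^δ(n,−n), and suppose 1 ≤ j < k ≤ n with π⁻¹(j) = −k. Let γ̂ = γδγ⁻¹δ·(−j, γ⁻¹(k))·(−k, γ⁻¹(j)), where (a,b) denotes a transposition. Then γ̂ has exactly two cycles, namely (1,2,…,j−1,−(k−1),−(k−2),…,−j,k,k+1,…,n) and (−n,−(n−1),…,−k,j,j+1,…,k−1,−(j−1),…,−1); moreover every cycle of π is contained in one of these two cycles of γ̂, and #(π) + #(π⁻¹γ̂) = 2n + 2. -/

import Mathlib

noncomputable section

open MeasureTheory ProbabilityTheory Matrix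

/-- The permutation `δ` of `ℤ` given by `δ(k) = -k`. -/
def deltaZ : Equiv.Perm ℤ := Equiv.neg ℤ

def epsFun : ℤ → ℤ := fun k => if Even k then -k else k

lemma epsFun_involutive : Function.Involutive epsFun := by
  intro k
  simp only [epsFun]
  by_cases h : Even k <;> simp [h, even_neg]

/-- The permutation `ε` of `ℤ`: `ε(k) = k` if `|k|` is odd and `ε(k) = -k` if `|k|` is even. -/
def epsZ : Equiv.Perm ℤ := Function.Involutive.toPerm epsFun epsFun_involutive

/-- The permutation of `ℤ` acting as the cycle `(1, 2, …, n)` and fixing everything else. -/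
def gammaZ (n : ℕ) : Equiv.Perm ℤ :=
  (((List.range (n - 1)).map (fun i => Equiv.swap ((i : ℤ) + 1) ((i : ℤ) + 2))).prod)

/-- The permutation of `ℤ` acting as `(1,2)(3,4)⋯(2n-1,2n)` and fixing everything else. -/
def omegaZ (n : ℕ) : Equiv.Perm ℤ :=
  (((List.range n).map (fun i => Equiv.swap (2 * (i : ℤ) + 1) (2 * (i : ℤ) + 2))).prod)

/-- `γδγ⁻¹δ`. -/
def tgamma (n : ℕ) : Equiv.Perm ℤ := gammaZ n * deltaZ * (gammaZ n)⁻¹ * deltaZ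

/-- `ω̃ = ωδωδ`. -/
def tomega (n : ℕ) : Equiv.Perm ℤ := omegaZ n * deltaZ * omegaZ n * deltaZ

/-- The set `[n] = {1, …, n}` inside `ℤ`. -/
def Ipos (n : ℕ) : Set ℤ := Set.Icc 1 (n : ℤ)

/-- The set `[±n] = {-n, …, -1, 1, …, n}` inside `ℤ`. -/
def Ipm (n : ℕ) : Set ℤ := {k : ℤ | 1 ≤ |k| ∧ |k| ≤ (n : ℤ)}

/-- The number of orbits meeting `S` of the subgroup of `Equiv.Perm ℤ` generated by `G`. -/
def orbCount (G : Set (Equiv.Perm ℤ)) (S : Set ℤ) : ℕ :=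
  Set.ncard {O : Set ℤ | ∃ x ∈ S, O = MulAction.orbit (Subgroup.closure G) x}

/-- `#(π)`, the number of cycles of `π` regarded as a permutation of the finite set `S`. -/
def cyc (π : Equiv.Perm ℤ) (S : Set ℤ) : ℕ := orbCount {π} S

/-- `#(π ∨ σ)`, the number of orbits on `S` of the subgroup generated by `π` and `σ`. -/
def joinCyc (π σ : Equiv.Perm ℤ) (S : Set ℤ) : ℕ := orbCount {π, σ} S

/-- The subgroup generated by `G` acts transitively on `S`. -/
def TransOn (G : Set (Equiv.Perm ℤ)) (S : Set ℤ) : Prop :=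
  ∀ x ∈ S, ∀ y ∈ S, y ∈ MulAction.orbit (Subgroup.closure G) x

/-- `π` fixes every point outside `S`, i.e. `π` is a permutation of `S`. -/
def SuppIn (π : Equiv.Perm ℤ) (S : Set ℤ) : Prop := ∀ k, k ∉ S → π k = k

/-- On `S`, the permutation `π` is a pairing: all of its cycles have exactly two elements. -/
def IsPairingOn (π : Equiv.Perm ℤ) (S : Set ℤ) : Prop :=
  ∀ k ∈ S, π k ≠ k ∧ π (π k) = k

/-- `P₂(2n)`: pairings of `[2n] = {1, …, 2n}`. -/
def P2 (n : ℕ) : Set (Equiv.Perm ℤ) :=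
  {π | SuppIn π (Ipos (2 * n)) ∧ IsPairingOn π (Ipos (2 * n))}

/-- `NC(n)`: non-crossing permutations of `[n]`. -/
def NCperm (n : ℕ) : Set (Equiv.Perm ℤ) :=
  {σ | SuppIn σ (Ipos n) ∧ cyc σ (Ipos n) + cyc (σ⁻¹ * gammaZ n) (Ipos n) = n + 1}

/-- `S_NC(n, -n)`: non-crossing annular permutations of `[±n]` (same orientation). -/
def SNC (n : ℕ) : Set (Equiv.Perm ℤ) :=
  {π | SuppIn π (Ipm n) ∧ TransOn {π, tgamma n} (Ipm n) ∧
       cyc π (Ipm n) + cyc (π⁻¹ * tgamma n) (Ipm n) = 2 * n}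

/-- `S_NC^δ(n, -n) = {π ∈ S_NC(n,-n) : πδ is a pairing}`. -/
def SNCdelta (n : ℕ) : Set (Equiv.Perm ℤ) :=
  {π | π ∈ SNC n ∧ IsPairingOn (π * deltaZ) (Ipm n)}

/-- `NC₂^δ(2n, -2n)`. -/
def NC2delta (n : ℕ) : Set (Equiv.Perm ℤ) :=
  {ρ | SuppIn ρ (Ipm (2 * n)) ∧ IsPairingOn ρ (Ipm (2 * n)) ∧
       deltaZ * ρ * deltaZ = ρ ∧ (∀ k ∈ Ipm (2 * n), ρ k ≠ -k) ∧
       TransOn {ρ, tgamma (2 * n)} (Ipm (2 * n)) ∧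
       cyc ρ (Ipm (2 * n)) + cyc (ρ⁻¹ * tgamma (2 * n)) (Ipm (2 * n)) = 4 * n}

/-- `x` lies in a through cycle of `π`: the cycle of `π` containing `x` contains both a
positive and a negative element. -/
def ThroughAt (π : Equiv.Perm ℤ) (x : ℤ) : Prop :=
  (∃ y ∈ MulAction.orbit (Subgroup.zpowers π) x, 0 < y) ∧
  (∃ y ∈ MulAction.orbit (Subgroup.zpowers π) x, y < 0)

/-- The set `E = {2, 4, …, 2n} ∪ {-1, -3, …, -(2n-1)}`. -/
def Eset (n : ℕ) : Set ℤ :=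
  {x : ℤ | (1 ≤ x ∧ x ≤ 2 * (n : ℤ) ∧ Even x) ∨
           (-(2 * (n : ℤ)) + 1 ≤ x ∧ x ≤ -1 ∧ Odd x)}

/-- The list `1, …, j-1, -(k-1), -(k-2), …, -j, k, k+1, …, n`. -/
def hatCycle1 (n j k : ℕ) : List ℤ :=
  ((List.range (j - 1)).map (fun i => (i : ℤ) + 1)) ++
  ((List.range (k - j)).map (fun i => -(k : ℤ) + 1 + (i : ℤ))) ++
  ((List.range (n - k + 1)).map (fun i => (k : ℤ) + (i : ℤ)))

/-- The list `-n, -(n-1), …, -k, j, j+1, …, k-1, -(j-1), …, -1`. -/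
def hatCycle2 (n j k : ℕ) : List ℤ :=
  ((List.range (n - k + 1)).map (fun i => -(n : ℤ) + (i : ℤ))) ++
  ((List.range (k - j)).map (fun i => (j : ℤ) + (i : ℤ))) ++
  ((List.range (j - 1)).map (fun i => -(j : ℤ) + 1 + (i : ℤ)))

/-- The permutation of `[±n]` whose two cycles are `hatCycle1` and `hatCycle2`. -/
def hatGamma (n j k : ℕ) : Equiv.Perm ℤ :=
  (hatCycle1 n j k).formPerm * (hatCycle2 n j k).formPerm

namespace Unrolling

open Equiv Equiv.Perm Subgroup

/-! ### Orbit machinery -/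

def orbG (H : Subgroup (Equiv.Perm ℤ)) (x : ℤ) : Set ℤ := MulAction.orbit H x

lemma mem_orbG {H : Subgroup (Equiv.Perm ℤ)} {x y : ℤ} :
    y ∈ orbG H x ↔ ∃ g ∈ H, g x = y := by
  constructor
  · rintro ⟨⟨g, hg⟩, rfl⟩; exact ⟨g, hg, rfl⟩
  · rintro ⟨g, hg, rfl⟩; exact ⟨⟨g, hg⟩, rfl⟩

lemma mem_orbG_self (H : Subgroup (Equiv.Perm ℤ)) (x : ℤ) : x ∈ orbG H x :=
  MulAction.mem_orbit_self x

lemma orbG_eq_of_mem {H : Subgroup (Equiv.Perm ℤ)} {x y : ℤ} (h : y ∈ orbG H x) :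
    orbG H y = orbG H x :=
  (MulAction.orbit_eq_iff).mpr h

lemma orbG_mono {H K : Subgroup (Equiv.Perm ℤ)} (hHK : H ≤ K) (x : ℤ) :
    orbG H x ⊆ orbG K x := by
  intro y hy
  rw [mem_orbG] at hy ⊢
  obtain ⟨g, hg, rfl⟩ := hy
  exact ⟨g, hHK hg, rfl⟩

def orbP (σ : Equiv.Perm ℤ) (x : ℤ) : Set ℤ := orbG (Subgroup.closure {σ}) x

lemma mem_orbP {σ : Equiv.Perm ℤ} {x y : ℤ} : y ∈ orbP σ x ↔ σ.SameCycle x y := by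
  unfold orbP
  rw [mem_orbG]
  constructor
  · rintro ⟨g, hg, rfl⟩
    rw [Subgroup.mem_closure_singleton] at hg
    obtain ⟨i, rfl⟩ := hg
    exact ⟨i, rfl⟩
  · rintro ⟨i, hi⟩
    exact ⟨σ ^ i, Subgroup.mem_closure_singleton.mpr ⟨i, rfl⟩, hi⟩

lemma mem_orbP_self (σ : Equiv.Perm ℤ) (x : ℤ) : x ∈ orbP σ x := mem_orbG_self _ x

lemma orbP_eq_of_mem {σ : Equiv.Perm ℤ} {x y : ℤ} (h : y ∈ orbP σ x) :
    orbP σ y = orbP σ x := orbG_eq_of_mem h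

lemma orbG_subset {G : Set (Equiv.Perm ℤ)} {x : ℤ} {T : Set ℤ} (hx : x ∈ T)
    (hT : ∀ g ∈ G, ∀ y ∈ T, g y ∈ T ∧ g⁻¹ y ∈ T) :
    orbG (Subgroup.closure G) x ⊆ T := by
  intro y hy
  rw [mem_orbG] at hy
  obtain ⟨g, hg, rfl⟩ := hy
  have key : ∀ y ∈ T, g y ∈ T ∧ g⁻¹ y ∈ T := by
    induction hg using Subgroup.closure_induction with
    | mem g hg => exact hT g hg
    | one => simpa using fun y hy => ⟨hy, hy⟩
    | mul g h _ _ hg hh =>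
      intro y hy
      constructor
      · have := (hg (h y) ((hh y hy).1)).1
        simpa [Equiv.Perm.mul_apply] using this
      · have := (hh (g⁻¹ y) ((hg y hy).2)).2
        simpa [_root_.mul_inv_rev, Equiv.Perm.mul_apply] using this
    | inv g _ hg =>
      intro y hy
      refine ⟨(hg y hy).2, ?_⟩
      simpa using (hg y hy).1
  exact (key x hx).1

lemma orbP_subset {σ : Equiv.Perm ℤ} {x : ℤ} {T : Set ℤ} (hx : x ∈ T)
    (hT : ∀ y ∈ T, σ y ∈ T ∧ σ⁻¹ y ∈ T) :
    orbP σ x ⊆ T :=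
  orbG_subset hx (by rintro g rfl; exact hT)

lemma apply_mem_orbP {σ : Equiv.Perm ℤ} {x y : ℤ} (h : y ∈ orbP σ x) : σ y ∈ orbP σ x := by
  rw [mem_orbP] at h ⊢
  exact h.trans ⟨1, by simp⟩

lemma inv_apply_mem_orbP {σ : Equiv.Perm ℤ} {x y : ℤ} (h : y ∈ orbP σ x) :
    σ⁻¹ y ∈ orbP σ x := by
  rw [mem_orbP] at h ⊢
  exact h.trans ⟨-1, by simp⟩

lemma orbP_mem_symm {σ : Equiv.Perm ℤ} {x y : ℤ} (h : y ∈ orbP σ x) : x ∈ orbP σ y := by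
  rw [mem_orbP] at h ⊢
  exact h.symm

lemma orbP_disjoint {σ : Equiv.Perm ℤ} {x y : ℤ} (h : x ∉ orbP σ y) (z : ℤ)
    (hz : z ∈ orbP σ x) : z ∉ orbP σ y := by
  intro hz'
  refine h ?_
  rw [← orbP_eq_of_mem hz', orbP_eq_of_mem hz]
  exact mem_orbP_self σ x

end Unrolling

namespace Unrolling

open Equiv Equiv.Perm Subgroup

/-! ### Counting lemmas -/

lemma orbCount_eq (G : Set (Equiv.Perm ℤ)) (S : Set ℤ) :
    orbCount G S = ((orbG (Subgroup.closure G)) '' S).ncard := by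
  unfold orbCount
  congr 1
  ext O
  constructor
  · rintro ⟨x, hx, rfl⟩; exact ⟨x, hx, rfl⟩
  · rintro ⟨x, hx, rfl⟩; exact ⟨x, hx, rfl⟩

lemma cyc_eq (σ : Equiv.Perm ℤ) (S : Set ℤ) : cyc σ S = ((orbP σ) '' S).ncard :=
  orbCount_eq _ _

/-- Abstract merge counting lemma for class maps. -/
lemma count_merge {S : Set ℤ} (hS : S.Finite) (f g : ℤ → Set ℤ)
    (hf_mem : ∀ x, x ∈ f x) (hf_cl : ∀ x y, y ∈ f x → f y = f x)
    (hg_cl : ∀ x y, y ∈ g x → g y = g x)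
    {a b : ℤ} (ha : a ∈ S) (hb : b ∈ S)
    (hab : f a ≠ f b)
    (hga : g a = f a ∪ f b) (hgb : g b = f a ∪ f b)
    (hother : ∀ x, x ∉ f a ∪ f b → g x = f x) :
    (g '' S).ncard + 1 = (f '' S).ncard := by
  have hfin : (f '' S).Finite := hS.image f
  have himg : g '' S = insert (f a ∪ f b) ((f '' S) \ {f a, f b}) := by
    ext O
    constructor
    · rintro ⟨x, hx, rfl⟩
      by_cases hxU : x ∈ f a ∪ f b
      · left
        have : g x = g a := by
          rw [hg_cl a x (by rw [hga]; exact hxU)]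
        rw [this, hga]
      · right
        refine ⟨⟨x, hx, (hother x hxU).symm ▸ rfl⟩, ?_⟩
        · rw [hother x hxU]
          simp only [Set.mem_insert_iff, Set.mem_singleton_iff]
          push_neg
          constructor
          · intro hfx; exact hxU (Or.inl (hfx ▸ hf_mem x))
          · intro hfx; exact hxU (Or.inr (hfx ▸ hf_mem x))
    · rintro (rfl | ⟨⟨x, hx, rfl⟩, hO⟩)
      · exact ⟨a, ha, hga⟩
      · simp only [Set.mem_insert_iff, Set.mem_singleton_iff] at hO
        push_neg at hO
        refine ⟨x, hx, ?_⟩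
        rw [hother x ?_]
        rintro (hxa | hxb)
        · exact hO.1 (hf_cl a x hxa)
        · exact hO.2 (hf_cl b x hxb)
  have hnotmem : (f a ∪ f b) ∉ (f '' S) \ {f a, f b} := by
    rintro ⟨⟨x, hx, hfx⟩, hO⟩
    simp only [Set.mem_insert_iff, Set.mem_singleton_iff] at hO
    push_neg at hO
    have h1 : f a = f x := hf_cl x a (by rw [hfx]; exact Or.inl (hf_mem a))
    have h2 : f b = f x := hf_cl x b (by rw [hfx]; exact Or.inr (hf_mem b))
    exact hab (h1.trans h2.symm)
  have hsub : {f a, f b} ⊆ f '' S := by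
    intro O hO
    rcases hO with rfl | hO
    · exact ⟨a, ha, rfl⟩
    · rw [Set.mem_singleton_iff] at hO
      subst hO
      exact ⟨b, hb, rfl⟩
  have hcard2 : ({f a, f b} : Set (Set ℤ)).ncard = 2 := Set.ncard_pair hab
  rw [himg, Set.ncard_insert_of_notMem hnotmem (hfin.diff)]
  rw [Set.ncard_diff hsub ((Set.finite_singleton _).insert _), hcard2]
  have h2le : 2 ≤ (f '' S).ncard := by
    have := Set.ncard_le_ncard hsub hfin
    omega
  omega

/-! ### SuppIn lemmas -/

lemma suppin_apply_mem {σ : Equiv.Perm ℤ} {S : Set ℤ} (hσ : SuppIn σ S) {x : ℤ}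
    (hx : x ∈ S) : σ x ∈ S := by
  by_contra h
  have := hσ _ h
  have := σ.injective this
  rw [this] at h
  exact h hx

lemma suppin_inv {σ : Equiv.Perm ℤ} {S : Set ℤ} (hσ : SuppIn σ S) : SuppIn σ⁻¹ S := by
  intro x hx
  have := hσ x hx
  exact (Equiv.Perm.inv_eq_iff_eq.mpr this.symm)

lemma suppin_mul {σ τ : Equiv.Perm ℤ} {S : Set ℤ} (hσ : SuppIn σ S) (hτ : SuppIn τ S) :
    SuppIn (σ * τ) S := by
  intro x hx
  rw [Equiv.Perm.mul_apply, hτ x hx, hσ x hx]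

lemma suppin_swap {a b : ℤ} {S : Set ℤ} (ha : a ∈ S) (hb : b ∈ S) :
    SuppIn (Equiv.swap a b) S := by
  intro x hx
  exact Equiv.swap_apply_of_ne_of_ne (fun h => hx (h ▸ ha)) (fun h => hx (h ▸ hb))

/-! ### Periods -/

lemma exists_period {σ : Equiv.Perm ℤ} {S : Set ℤ} (hS : S.Finite) (hσ : SuppIn σ S)
    (x : ℤ) : ∃ m : ℕ, 0 < m ∧ (σ ^ m) x = x := by
  by_cases hx : x ∈ S
  · have hmap : ∀ s : ℕ, (σ ^ s) x ∈ S := by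
      intro s
      induction s with
      | zero => simpa using hx
      | succ s ih =>
        rw [pow_succ', Equiv.Perm.mul_apply]
        exact suppin_apply_mem hσ ih
    have hpig : ∃ i ∈ (Set.univ : Set ℕ), ∃ j ∈ (Set.univ : Set ℕ),
        i ≠ j ∧ (σ ^ i) x = (σ ^ j) x :=
      Set.infinite_univ.exists_ne_map_eq_of_mapsTo
        (f := fun s : ℕ => (σ ^ s) x) (fun s _ => hmap s) hS
    obtain ⟨i, -, j, -, hij, hueq⟩ := hpig
    rcases hij.lt_or_gt with hlt | hlt
    · refine ⟨j - i, by omega, ?_⟩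
      have h2 : (σ ^ i) ((σ ^ (j - i)) x) = (σ ^ i) x := by
        rw [← Equiv.Perm.mul_apply, ← pow_add, show i + (j - i) = j from by omega]
        exact hueq.symm
      exact (σ ^ i).injective h2
    · refine ⟨i - j, by omega, ?_⟩
      have h2 : (σ ^ j) ((σ ^ (i - j)) x) = (σ ^ j) x := by
        rw [← Equiv.Perm.mul_apply, ← pow_add, show j + (i - j) = i from by omega]
        exact hueq
      exact (σ ^ j).injective h2
  · exact ⟨1, Nat.one_pos, by simpa using hσ x hx⟩

end Unrolling

namespace Unrolling

open Equiv Equiv.Perm Subgroup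

/-! ### Walks and the transposition lemma -/

lemma zpow_reduce {ρ : Equiv.Perm ℤ} {x : ℤ} {m : ℕ} (hm : 0 < m) (hfix : (ρ ^ m) x = x)
    (i : ℤ) : ∃ s : ℕ, s < m ∧ (ρ ^ i) x = (ρ ^ s) x := by
  have h1 : 0 ≤ i % m := Int.emod_nonneg i (by exact_mod_cast hm.ne')
  have h2 : i % m < m := Int.emod_lt_of_pos i (by exact_mod_cast hm)
  refine ⟨(i % m).toNat, by omega, ?_⟩
  have hz : ρ ^ i = ρ ^ (i % (m : ℤ)) * ((ρ ^ (m : ℕ)) ^ (i / (m : ℤ))) := by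
    rw [← zpow_natCast ρ m, ← _root_.zpow_mul, ← _root_.zpow_add]
    congr 1
    have := Int.emod_add_mul_ediv i m
    linarith
  rw [hz, Equiv.Perm.mul_apply, Equiv.Perm.zpow_apply_eq_self_of_apply_eq_self hfix,
    ← zpow_natCast ρ ((i % (m:ℤ)).toNat), Int.toNat_of_nonneg h1]

lemma sameCycle_swap_mul_of_not {σ : Equiv.Perm ℤ} {S : Set ℤ} (hS : S.Finite)
    (hσ : SuppIn σ S) {a b : ℤ} (hab : a ≠ b) (h : ¬ σ.SameCycle a b) :
    (Equiv.swap a b * σ).SameCycle a b := by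
  classical
  have hex := exists_period hS hσ b
  obtain ⟨hm_pos, hm_fix⟩ : 0 < Nat.find hex ∧ (σ ^ Nat.find hex) b = b := Nat.find_spec hex
  set m := Nat.find hex with hm_def
  have hmin : ∀ s, 0 < s → s < m → (σ ^ s) b ≠ b := by
    intro s hs hsm hfix
    exact (Nat.find_min hex hsm) ⟨hs, hfix⟩
  have hwalk : ∀ s, s < m → ((Equiv.swap a b * σ) ^ s) b = (σ ^ s) b := by
    intro s
    induction s with
    | zero => simp
    | succ s ih =>
      intro hsm
      rw [pow_succ', Equiv.Perm.mul_apply, ih (by omega), Equiv.Perm.mul_apply,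
        ← Equiv.Perm.mul_apply σ, ← pow_succ']
      apply Equiv.swap_apply_of_ne_of_ne
      · intro heq
        exact h (Equiv.Perm.SameCycle.symm ⟨((s : ℤ) + 1), by
          rw [show (s : ℤ) + 1 = ((s + 1 : ℕ) : ℤ) from by push_cast; ring, zpow_natCast]
          exact heq⟩)
      · exact hmin (s + 1) (by omega) (by omega)
  have hfin : ((Equiv.swap a b * σ) ^ m) b = a := by
    have hm1 : m - 1 < m := by omega
    rw [show m = (m - 1) + 1 from by omega, pow_succ', Equiv.Perm.mul_apply,
      hwalk (m - 1) hm1, Equiv.Perm.mul_apply, ← Equiv.Perm.mul_apply σ, ← pow_succ',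
      show (m - 1) + 1 = m from by omega, hm_fix, Equiv.swap_apply_right]
  exact Equiv.Perm.SameCycle.symm ⟨(m : ℤ), by rw [zpow_natCast]; exact hfin⟩

lemma not_sameCycle_swap_mul_of {σ : Equiv.Perm ℤ} {S : Set ℤ} (hS : S.Finite)
    (hσ : SuppIn σ S) {a b : ℤ} (hab : a ≠ b) (h : σ.SameCycle a b) :
    ¬ (Equiv.swap a b * σ).SameCycle a b := by
  classical
  have hex : ∃ m : ℕ, 0 < m ∧ (σ ^ m) a ∈ ({a, b} : Set ℤ) := by
    obtain ⟨m, hm, hfix⟩ := exists_period hS hσ a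
    exact ⟨m, hm, Or.inl hfix⟩
  obtain ⟨hm_pos, hm_mem⟩ : 0 < Nat.find hex ∧ (σ ^ Nat.find hex) a ∈ ({a, b} : Set ℤ) :=
    Nat.find_spec hex
  set m := Nat.find hex with hm_def
  simp only [Set.mem_insert_iff, Set.mem_singleton_iff] at hm_mem
  have hmin : ∀ s, 0 < s → s < m → (σ ^ s) a ≠ a ∧ (σ ^ s) a ≠ b := by
    intro s hs hsm
    constructor <;> intro hfix <;>
      exact (Nat.find_min hex hsm) ⟨hs, by rw [hfix]; simp [Set.mem_insert_iff]⟩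
  have hmb : (σ ^ m) a = b := by
    rcases hm_mem with hma | hmb
    · exfalso
      obtain ⟨i, hi⟩ := h
      obtain ⟨s, hsm, hs⟩ := zpow_reduce hm_pos hma i
      rw [hi] at hs
      rcases Nat.eq_zero_or_pos s with rfl | hspos
      · rw [pow_zero] at hs; exact hab hs.symm
      · exact (hmin s hspos hsm).2 hs.symm
    · exact hmb
  have hwalk : ∀ s, s < m → ((Equiv.swap a b * σ) ^ s) a = (σ ^ s) a := by
    intro s
    induction s with
    | zero => simp
    | succ s ih =>
      intro hsm
      rw [pow_succ', Equiv.Perm.mul_apply, ih (by omega), Equiv.Perm.mul_apply,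
        ← Equiv.Perm.mul_apply σ, ← pow_succ']
      exact Equiv.swap_apply_of_ne_of_ne (hmin (s + 1) (by omega) (by omega)).1
        (hmin (s + 1) (by omega) (by omega)).2
  have hper : ((Equiv.swap a b * σ) ^ m) a = a := by
    have hm1 : m - 1 < m := by omega
    rw [show m = (m - 1) + 1 from by omega, pow_succ', Equiv.Perm.mul_apply,
      hwalk (m - 1) hm1, Equiv.Perm.mul_apply, ← Equiv.Perm.mul_apply σ, ← pow_succ',
      show (m - 1) + 1 = m from by omega, hmb, Equiv.swap_apply_right]
  rintro ⟨i, hi⟩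
  obtain ⟨s, hsm, hs⟩ := zpow_reduce hm_pos hper i
  rw [hi] at hs
  rw [hwalk s hsm] at hs
  rcases Nat.eq_zero_or_pos s with rfl | hspos
  · rw [pow_zero] at hs; exact hab hs.symm
  · exact (hmin s hspos hsm).2 hs.symm

lemma orbP_swap_mul_merge {σ : Equiv.Perm ℤ} {S : Set ℤ} (hS : S.Finite) (hσ : SuppIn σ S)
    {a b : ℤ} (hab : a ≠ b) (h : ¬ σ.SameCycle a b) :
    (orbP (Equiv.swap a b * σ) a = orbP σ a ∪ orbP σ b ∧
     orbP (Equiv.swap a b * σ) b = orbP σ a ∪ orbP σ b) ∧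
    ∀ x, x ∉ orbP σ a ∪ orbP σ b → orbP (Equiv.swap a b * σ) x = orbP σ x := by
  set τ := Equiv.swap a b with hτ
  have hτσ_apply : ∀ y, (τ * σ) y = τ (σ y) := fun y => rfl
  have hτσ_inv : ∀ y, (τ * σ)⁻¹ y = σ⁻¹ (τ y) := by
    intro y
    simp [hτ, _root_.mul_inv_rev]
  have hba : b ∈ orbP (τ * σ) a :=
    mem_orbP.mpr (sameCycle_swap_mul_of_not hS hσ hab h)
  have haa : a ∈ orbP (τ * σ) a := mem_orbP_self _ _
  -- swap maps a set containing its class reps appropriately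
  have hswapU : ∀ {T : Set ℤ}, a ∈ T → b ∈ T → ∀ z ∈ T, τ z ∈ T := by
    intro T haT hbT z hz
    by_cases hza : z = a
    · rw [hza, hτ, Equiv.swap_apply_left]; exact hbT
    by_cases hzb : z = b
    · rw [hzb, hτ, Equiv.swap_apply_right]; exact haT
    · rw [hτ, Equiv.swap_apply_of_ne_of_ne hza hzb]; exact hz
  have haU : a ∈ orbP σ a ∪ orbP σ b := Or.inl (mem_orbP_self _ _)
  have hbU : b ∈ orbP σ a ∪ orbP σ b := Or.inr (mem_orbP_self _ _)
  have hUinv : ∀ y ∈ orbP σ a ∪ orbP σ b, (τ * σ) y ∈ orbP σ a ∪ orbP σ b ∧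
      (τ * σ)⁻¹ y ∈ orbP σ a ∪ orbP σ b := by
    intro y hy
    constructor
    · rw [hτσ_apply]
      refine hswapU haU hbU _ ?_
      rcases hy with hy | hy
      · exact Or.inl (apply_mem_orbP hy)
      · exact Or.inr (apply_mem_orbP hy)
    · rw [hτσ_inv]
      have : τ y ∈ orbP σ a ∪ orbP σ b := hswapU haU hbU _ hy
      rcases this with hy' | hy'
      · exact Or.inl (inv_apply_mem_orbP hy')
      · exact Or.inr (inv_apply_mem_orbP hy')
  have hUsub_a : orbP (τ * σ) a ⊆ orbP σ a ∪ orbP σ b := orbP_subset haU hUinv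
  have hUsub_b : orbP (τ * σ) b ⊆ orbP σ a ∪ orbP σ b := orbP_subset hbU hUinv
  have horbab : orbP (τ * σ) b = orbP (τ * σ) a := orbP_eq_of_mem hba
  -- reverse inclusions
  have hTinv : ∀ y ∈ orbP (τ * σ) a, σ y ∈ orbP (τ * σ) a ∧ σ⁻¹ y ∈ orbP (τ * σ) a := by
    intro y hy
    constructor
    · have h1 : (τ * σ) y ∈ orbP (τ * σ) a := apply_mem_orbP hy
      have h2 : σ y = τ ((τ * σ) y) := by
        rw [hτσ_apply, hτ, Equiv.swap_apply_self]
      rw [h2]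
      exact hswapU haa hba _ h1
    · have h1 : τ y ∈ orbP (τ * σ) a := hswapU haa hba _ hy
      have h2 : σ⁻¹ y = (τ * σ)⁻¹ (τ y) := by
        rw [hτσ_inv, hτ, Equiv.swap_apply_self]
      rw [h2]
      exact inv_apply_mem_orbP h1
  have hrev_a : orbP σ a ⊆ orbP (τ * σ) a := orbP_subset haa hTinv
  have hrev_b : orbP σ b ⊆ orbP (τ * σ) a := orbP_subset hba hTinv
  have heq_a : orbP (τ * σ) a = orbP σ a ∪ orbP σ b :=
    Set.Subset.antisymm hUsub_a (Set.union_subset hrev_a hrev_b)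
  refine ⟨⟨heq_a, by rw [horbab]; exact heq_a⟩, ?_⟩
  intro x hx
  have hxa : x ∉ orbP σ a := fun hc => hx (Or.inl hc)
  have hxb : x ∉ orbP σ b := fun hc => hx (Or.inr hc)
  have hdisja : ∀ z ∈ orbP σ x, z ≠ a ∧ z ≠ b := by
    intro z hz
    constructor
    · rintro rfl
      exact hxa (orbP_mem_symm hz)
    · rintro rfl
      exact hxb (orbP_mem_symm hz)
  have hagree : ∀ y ∈ orbP σ x, (τ * σ) y = σ y := by
    intro y hy
    have hz := hdisja _ (apply_mem_orbP hy)
    rw [hτσ_apply, hτ, Equiv.swap_apply_of_ne_of_ne hz.1 hz.2]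
  have hagree_inv : ∀ y ∈ orbP σ x, (τ * σ)⁻¹ y = σ⁻¹ y := by
    intro y hy
    have hz := hdisja _ hy
    rw [hτσ_inv, hτ, Equiv.swap_apply_of_ne_of_ne hz.1 hz.2]
  have hsub1 : orbP (τ * σ) x ⊆ orbP σ x := by
    apply orbP_subset (mem_orbP_self _ _)
    intro y hy
    rw [hagree _ hy, hagree_inv _ hy]
    exact ⟨apply_mem_orbP hy, inv_apply_mem_orbP hy⟩
  have hsub2 : orbP σ x ⊆ orbP (τ * σ) x := by
    have : orbP σ x ⊆ orbP σ x ∩ orbP (τ * σ) x := by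
      apply orbP_subset (Set.mem_inter (mem_orbP_self _ _) (mem_orbP_self _ _))
      intro y hy
      refine ⟨⟨apply_mem_orbP hy.1, ?_⟩, inv_apply_mem_orbP hy.1, ?_⟩
      · rw [← hagree _ hy.1]
        exact apply_mem_orbP hy.2
      · rw [← hagree_inv _ hy.1]
        exact inv_apply_mem_orbP hy.2
    exact fun z hz => (this hz).2
  exact Set.Subset.antisymm hsub1 hsub2

lemma cyc_swap_mul_merge {σ : Equiv.Perm ℤ} {S : Set ℤ} (hS : S.Finite) (hσ : SuppIn σ S)
    {a b : ℤ} (ha : a ∈ S) (hb : b ∈ S) (hab : a ≠ b) (h : ¬ σ.SameCycle a b) :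
    cyc (Equiv.swap a b * σ) S + 1 = cyc σ S := by
  rw [cyc_eq, cyc_eq]
  obtain ⟨⟨hga, hgb⟩, hother⟩ := orbP_swap_mul_merge hS hσ hab h
  refine count_merge hS (orbP σ) (orbP (Equiv.swap a b * σ))
    (fun x => mem_orbP_self _ _) (fun x y hy => orbP_eq_of_mem hy)
    (fun x y hy => orbP_eq_of_mem hy) ha hb ?_ hga hgb hother
  intro heq
  exact h (mem_orbP.mp (heq ▸ mem_orbP_self σ b : b ∈ orbP σ a))

lemma cyc_swap_mul_split {σ : Equiv.Perm ℤ} {S : Set ℤ} (hS : S.Finite) (hσ : SuppIn σ S)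
    {a b : ℤ} (ha : a ∈ S) (hb : b ∈ S) (hab : a ≠ b) (h : σ.SameCycle a b) :
    cyc (Equiv.swap a b * σ) S = cyc σ S + 1 := by
  have hσ' : SuppIn (Equiv.swap a b * σ) S := suppin_mul (suppin_swap ha hb) hσ
  have hnsc : ¬ (Equiv.swap a b * σ).SameCycle a b := not_sameCycle_swap_mul_of hS hσ hab h
  have hkey := cyc_swap_mul_merge hS hσ' ha hb hab hnsc
  rw [show Equiv.swap a b * (Equiv.swap a b * σ) = σ from by
    rw [← mul_assoc, Equiv.swap_mul_self, one_mul]] at hkey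
  omega

lemma cyc_mul_swap_split {σ : Equiv.Perm ℤ} {S : Set ℤ} (hS : S.Finite) (hσ : SuppIn σ S)
    {a b : ℤ} (ha : a ∈ S) (hb : b ∈ S) (hab : a ≠ b) (h : σ.SameCycle a b) :
    cyc (σ * Equiv.swap a b) S = cyc σ S + 1 := by
  have hconj : σ * Equiv.swap a b = Equiv.swap (σ a) (σ b) * σ := by
    rw [Equiv.swap_apply_apply, mul_assoc, inv_mul_cancel, mul_one]
  rw [hconj]
  refine cyc_swap_mul_split hS hσ (suppin_apply_mem hσ ha) (suppin_apply_mem hσ hb)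
    (fun hc => hab (σ.injective hc)) ?_
  rw [Equiv.Perm.sameCycle_apply_left, Equiv.Perm.sameCycle_apply_right]
  exact h

end Unrolling

namespace Unrolling

open Equiv Equiv.Perm Subgroup

/-! ### Subgroup orbit counting -/

lemma apply_mem_orbG {H : Subgroup (Equiv.Perm ℤ)} {g : Equiv.Perm ℤ} (hg : g ∈ H)
    {x y : ℤ} (h : y ∈ orbG H x) : g y ∈ orbG H x := by
  rw [mem_orbG] at h ⊢
  obtain ⟨h', hh', rfl⟩ := h
  exact ⟨g * h', H.mul_mem hg hh', rfl⟩

lemma orbG_mem_symm {H : Subgroup (Equiv.Perm ℤ)} {x y : ℤ} (h : y ∈ orbG H x) :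
    x ∈ orbG H y := by
  rw [mem_orbG] at h ⊢
  obtain ⟨g, hg, rfl⟩ := h
  exact ⟨g⁻¹, H.inv_mem hg, by simp⟩

lemma sameCycle_mem_orbG {H : Subgroup (Equiv.Perm ℤ)} {ρ : Equiv.Perm ℤ} (hρ : ρ ∈ H)
    {a b : ℤ} (h : ρ.SameCycle a b) : b ∈ orbG H a := by
  obtain ⟨i, hi⟩ := h
  rw [mem_orbG]
  exact ⟨ρ ^ i, H.zpow_mem hρ i, hi⟩

lemma orbG_count_mono {H K : Subgroup (Equiv.Perm ℤ)} (hHK : H ≤ K) {S : Set ℤ}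
    (hS : S.Finite) : ((orbG K) '' S).ncard ≤ ((orbG H) '' S).ncard := by
  have hU : ∀ x : ℤ, (⋃ y ∈ orbG H x, orbG K y) = orbG K x := by
    intro x
    apply Set.Subset.antisymm
    · intro z hz
      simp only [Set.mem_iUnion] at hz
      obtain ⟨y, hy, hz⟩ := hz
      rwa [orbG_eq_of_mem (orbG_mono hHK x hy)] at hz
    · intro z hz
      simp only [Set.mem_iUnion]
      exact ⟨x, mem_orbG_self _ _, hz⟩
  have himg : (orbG K) '' S = (fun A : Set ℤ => ⋃ y ∈ A, orbG K y) '' ((orbG H) '' S) := by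
    rw [Set.image_image]
    apply Set.image_congr
    intro x _
    exact (hU x).symm
  rw [himg]
  exact Set.ncard_image_le (hS.image _)

lemma orbCount_eq' (G : Set (Equiv.Perm ℤ)) (S : Set ℤ) :
    orbCount G S = ((orbG (Subgroup.closure G)) '' S).ncard := orbCount_eq G S

lemma orbCount_mono {G G' : Set (Equiv.Perm ℤ)}
    (h : Subgroup.closure G ≤ Subgroup.closure G') {S : Set ℤ} (hS : S.Finite) :
    orbCount G' S ≤ orbCount G S := by
  rw [orbCount_eq', orbCount_eq']
  exact orbG_count_mono h hS

/-- Structure of orbits after inserting a swap generator. -/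
lemma orbG_insert_swap (G : Set (Equiv.Perm ℤ)) {a b : ℤ} (hab : a ≠ b) :
    (orbG (closure (insert (Equiv.swap a b) G)) a
        = orbG (closure G) a ∪ orbG (closure G) b ∧
     orbG (closure (insert (Equiv.swap a b) G)) b
        = orbG (closure G) a ∪ orbG (closure G) b) ∧
    (∀ x, x ∉ orbG (closure G) a ∪ orbG (closure G) b →
      orbG (closure (insert (Equiv.swap a b) G)) x = orbG (closure G) x) := by
  set τ := Equiv.swap a b with hτ
  set H := closure G with hH
  set K := closure (insert τ G) with hK
  have hHK : H ≤ K := Subgroup.closure_mono (Set.subset_insert _ _)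
  have hτK : τ ∈ K := Subgroup.subset_closure (Set.mem_insert _ _)
  have hbKa : b ∈ orbG K a := by
    rw [mem_orbG]
    exact ⟨τ, hτK, Equiv.swap_apply_left a b⟩
  have hswapT : ∀ {T : Set ℤ}, a ∈ T → b ∈ T → ∀ z ∈ T, τ z ∈ T := by
    intro T haT hbT z hz
    by_cases hza : z = a
    · rw [hza, hτ, Equiv.swap_apply_left]; exact hbT
    by_cases hzb : z = b
    · rw [hzb, hτ, Equiv.swap_apply_right]; exact haT
    · rw [hτ, Equiv.swap_apply_of_ne_of_ne hza hzb]; exact hz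
  have haU : a ∈ orbG H a ∪ orbG H b := Or.inl (mem_orbG_self _ _)
  have hbU : b ∈ orbG H a ∪ orbG H b := Or.inr (mem_orbG_self _ _)
  -- U is invariant under the generators of K
  have hUinv : ∀ g ∈ insert τ G, ∀ y ∈ orbG H a ∪ orbG H b,
      g y ∈ orbG H a ∪ orbG H b ∧ g⁻¹ y ∈ orbG H a ∪ orbG H b := by
    rintro g (rfl | hg) y hy
    · constructor
      · exact hswapT haU hbU _ hy
      · rw [Equiv.swap_inv]
        exact hswapT haU hbU _ hy
    · have hgH : g ∈ H := Subgroup.subset_closure hg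
      constructor
      · rcases hy with hy | hy
        · exact Or.inl (apply_mem_orbG hgH hy)
        · exact Or.inr (apply_mem_orbG hgH hy)
      · rcases hy with hy | hy
        · exact Or.inl (apply_mem_orbG (H.inv_mem hgH) hy)
        · exact Or.inr (apply_mem_orbG (H.inv_mem hgH) hy)
  have hKa_sub : orbG K a ⊆ orbG H a ∪ orbG H b := orbG_subset haU hUinv
  have hKb_sub : orbG K b ⊆ orbG H a ∪ orbG H b := orbG_subset hbU hUinv
  have hKb_eq : orbG K b = orbG K a := orbG_eq_of_mem hbKa
  have heqa : orbG K a = orbG H a ∪ orbG H b := by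
    apply Set.Subset.antisymm hKa_sub
    apply Set.union_subset
    · exact orbG_mono hHK a
    · rw [← hKb_eq]
      exact orbG_mono hHK b
  refine ⟨⟨heqa, by rw [hKb_eq]; exact heqa⟩, ?_⟩
  intro x hx
  have hxa : x ∉ orbG H a := fun hc => hx (Or.inl hc)
  have hxb : x ∉ orbG H b := fun hc => hx (Or.inr hc)
  have hdisj : ∀ z ∈ orbG H x, z ≠ a ∧ z ≠ b := by
    intro z hz
    constructor
    · rintro rfl; exact hxa (orbG_mem_symm hz)
    · rintro rfl; exact hxb (orbG_mem_symm hz)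
  apply Set.Subset.antisymm
  · apply orbG_subset (mem_orbG_self _ _)
    rintro g (rfl | hg) y hy
    · rw [hτ, Equiv.swap_apply_of_ne_of_ne (hdisj y hy).1 (hdisj y hy).2, Equiv.swap_inv,
        Equiv.swap_apply_of_ne_of_ne (hdisj y hy).1 (hdisj y hy).2]
      exact ⟨hy, hy⟩
    · have hgH : g ∈ H := Subgroup.subset_closure hg
      exact ⟨apply_mem_orbG hgH hy, apply_mem_orbG (H.inv_mem hgH) hy⟩
  · exact orbG_mono hHK x

lemma orbCount_insert_swap_of_mem (G : Set (Equiv.Perm ℤ)) {a b : ℤ} (hab : a ≠ b)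
    (h : b ∈ orbG (closure G) a) (S : Set ℤ) :
    orbCount (insert (Equiv.swap a b) G) S = orbCount G S := by
  obtain ⟨⟨heqa, heqb⟩, hother⟩ := orbG_insert_swap G hab (a := a) (b := b)
  rw [orbCount_eq', orbCount_eq']
  congr 1
  apply Set.image_congr
  intro x _
  have hUeq : orbG (closure G) a ∪ orbG (closure G) b = orbG (closure G) a := by
    rw [orbG_eq_of_mem h, Set.union_self]
  by_cases hx : x ∈ orbG (closure G) a ∪ orbG (closure G) b
  · have hx' : x ∈ orbG (closure G) a := by rwa [hUeq] at hx
    have h1 : orbG (closure (insert (Equiv.swap a b) G)) x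
        = orbG (closure (insert (Equiv.swap a b) G)) a :=
      orbG_eq_of_mem (orbG_mono (Subgroup.closure_mono (Set.subset_insert _ _)) a hx')
    rw [h1, heqa, hUeq, orbG_eq_of_mem hx']
  · exact hother x hx

lemma orbCount_insert_swap_le (G : Set (Equiv.Perm ℤ)) (a b : ℤ) {S : Set ℤ}
    (hS : S.Finite) : orbCount (insert (Equiv.swap a b) G) S ≤ orbCount G S :=
  orbCount_mono (Subgroup.closure_mono (Set.subset_insert _ _)) hS

lemma orbCount_le_insert_swap (G : Set (Equiv.Perm ℤ)) {a b : ℤ} (hab : a ≠ b) {S : Set ℤ}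
    (hS : S.Finite) (ha : a ∈ S) (hb : b ∈ S) :
    orbCount G S ≤ orbCount (insert (Equiv.swap a b) G) S + 1 := by
  by_cases h : b ∈ orbG (closure G) a
  · rw [orbCount_insert_swap_of_mem G hab h]
    omega
  · obtain ⟨⟨heqa, heqb⟩, hother⟩ := orbG_insert_swap G hab (a := a) (b := b)
    rw [orbCount_eq', orbCount_eq']
    have hcnt := count_merge hS (orbG (closure G)) (orbG (closure (insert (Equiv.swap a b) G)))
      (fun x => mem_orbG_self _ _) (fun x y hy => orbG_eq_of_mem hy)
      (fun x y hy => orbG_eq_of_mem hy) ha hb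
      (fun heq => h (heq ▸ mem_orbG_self (closure G) b : b ∈ orbG (closure G) a))
      heqa heqb hother
    omega

/-! ### Cycle counting basics -/

lemma cyc_le_ncard (σ : Equiv.Perm ℤ) {S : Set ℤ} (hS : S.Finite) : cyc σ S ≤ S.ncard := by
  rw [cyc_eq]
  exact Set.ncard_image_le hS

lemma cyc_add_one_le_of_moves {σ : Equiv.Perm ℤ} {S : Set ℤ} (hS : S.Finite)
    (hσ : SuppIn σ S) {x : ℤ} (hx : x ∈ S) (hmoves : σ x ≠ x) :
    cyc σ S + 1 ≤ S.ncard := by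
  have hσx : σ x ∈ S := suppin_apply_mem hσ hx
  have himg : (orbP σ) '' S = (orbP σ) '' (S \ {x}) := by
    apply Set.Subset.antisymm
    · rintro O ⟨y, hy, rfl⟩
      by_cases hyx : y = x
      · refine ⟨σ x, ⟨hσx, ?_⟩, ?_⟩
        · simpa using fun hc => hmoves hc
        · rw [hyx]
          exact orbP_eq_of_mem (apply_mem_orbP (mem_orbP_self σ x))
      · exact ⟨y, ⟨hy, by simpa using hyx⟩, rfl⟩
    · exact Set.image_mono Set.diff_subset
  rw [cyc_eq, himg]
  have h1 : ((orbP σ) '' (S \ {x})).ncard ≤ (S \ {x}).ncard :=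
    Set.ncard_image_le (hS.diff)
  have h2 : (S \ {x}).ncard = S.ncard - 1 := by
    rw [show S \ {x} = S \ {x} from rfl]
    rw [← Set.ncard_singleton x, ← Set.ncard_diff (by simpa using hx) (Set.finite_singleton x)]
  have h3 : 0 < S.ncard := (Set.ncard_pos hS).mpr ⟨x, hx⟩
  omega

lemma cyc_one (S : Set ℤ) (hS : S.Finite) : cyc (1 : Equiv.Perm ℤ) S = S.ncard := by
  rw [cyc_eq]
  have : ∀ x : ℤ, orbP (1 : Equiv.Perm ℤ) x = {x} := by
    intro x
    ext y
    rw [mem_orbP]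
    constructor
    · rintro ⟨i, hi⟩
      simp only [_root_.one_zpow, Equiv.Perm.one_apply] at hi
      simp [hi]
    · rintro rfl
      · exact ⟨0, by simp⟩
  have himg : (orbP (1 : Equiv.Perm ℤ)) '' S = (fun x => ({x} : Set ℤ)) '' S := by
    apply Set.image_congr
    intro x _
    exact this x
  rw [himg]
  exact Set.ncard_image_of_injective S (fun x y h => by simpa using h)

/-! ### The Euler (genus) inequality -/

lemma euler_ineq {S : Set ℤ} (hS : S.Finite) {β : Equiv.Perm ℤ} (hβ : SuppIn β S)
    {α : Equiv.Perm ℤ} (hα : SuppIn α S) :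
    cyc α S + cyc (α⁻¹ * β) S + cyc β S ≤ S.ncard + 2 * orbCount {α, β} S := by
  suffices H : ∀ N : ℕ, ∀ α : Equiv.Perm ℤ, SuppIn α S → S.ncard - cyc α S ≤ N →
      cyc α S + cyc (α⁻¹ * β) S + cyc β S ≤ S.ncard + 2 * orbCount {α, β} S by
    exact H (S.ncard - cyc α S) α hα le_rfl
  intro N
  induction N with
  | zero =>
    intro α hα hmeas
    have hle := cyc_le_ncard α hS
    have hcyc : cyc α S = S.ncard := by omega
    have hone : α = 1 := by
      ext x
      by_cases hx : x ∈ S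
      · by_contra hmoves
        have := cyc_add_one_le_of_moves hS hα hx (by simpa using hmoves)
        omega
      · simpa using hα x hx
    subst hone
    have h1 : cyc ((1 : Equiv.Perm ℤ)⁻¹ * β) S = cyc β S := by norm_num
    have h2 : orbCount {(1 : Equiv.Perm ℤ), β} S = cyc β S := by
      unfold cyc
      rw [orbCount_eq', orbCount_eq']
      have : closure ({(1 : Equiv.Perm ℤ), β} : Set (Equiv.Perm ℤ)) = closure {β} := by
        apply le_antisymm
        · rw [Subgroup.closure_le]
          rintro g (rfl | hg)
          · exact Subgroup.one_mem _
          · rw [Set.mem_singleton_iff] at hg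
            subst hg
            exact Subgroup.subset_closure rfl
        · exact Subgroup.closure_mono (Set.subset_insert _ _)
      rw [this]
    rw [h1, h2, cyc_one S hS]
    omega
  | succ N ih =>
    intro A hA hmeas
    by_cases hA1 : A = 1
    · subst hA1
      have h1 : cyc ((1 : Equiv.Perm ℤ)⁻¹ * β) S = cyc β S := by norm_num
      have h2 : orbCount {(1 : Equiv.Perm ℤ), β} S = cyc β S := by
        unfold cyc
        rw [orbCount_eq', orbCount_eq']
        have : closure ({(1 : Equiv.Perm ℤ), β} : Set (Equiv.Perm ℤ)) = closure {β} := by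
          apply le_antisymm
          · rw [Subgroup.closure_le]
            rintro g (rfl | hg)
            · exact Subgroup.one_mem _
            · rw [Set.mem_singleton_iff] at hg
              subst hg
              exact Subgroup.subset_closure rfl
          · exact Subgroup.closure_mono (Set.subset_insert _ _)
        rw [this]
      rw [h1, h2, cyc_one S hS]
      omega
    · obtain ⟨a, hmoves⟩ : ∃ x, A x ≠ x := by
        by_contra hc
        push_neg at hc
        exact hA1 (Equiv.ext hc)
      have ha : a ∈ S := by
        by_contra hxS
        exact hmoves (hA a hxS)
      have hb : A a ∈ S := suppin_apply_mem hA ha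
      have hab : a ≠ A a := fun h => hmoves h.symm
      have hττ : Equiv.swap a (A a) * Equiv.swap a (A a) = 1 := Equiv.swap_mul_self a (A a)
      have hA' : SuppIn (A * Equiv.swap a (A a)) S := suppin_mul hA (suppin_swap ha hb)
      have hsc_ab : A.SameCycle a (A a) := ⟨1, by simp⟩
      have hcyc' : cyc (A * Equiv.swap a (A a)) S = cyc A S + 1 :=
        cyc_mul_swap_split hS hA ha hb hab hsc_ab
      have hcle : cyc (A * Equiv.swap a (A a)) S ≤ S.ncard := cyc_le_ncard _ hS
      have hmeas' : S.ncard - cyc (A * Equiv.swap a (A a)) S ≤ N := by omega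
      have hIH := ih (A * Equiv.swap a (A a)) hA' hmeas'
      have hρ : SuppIn (A⁻¹ * β) S := suppin_mul (suppin_inv hA) hβ
      have hρ'ρ : (A * Equiv.swap a (A a))⁻¹ * β = Equiv.swap a (A a) * (A⁻¹ * β) := by
        rw [_root_.mul_inv_rev, Equiv.swap_inv, mul_assoc]
      have hρ' : SuppIn ((A * Equiv.swap a (A a))⁻¹ * β) S := suppin_mul (suppin_inv hA') hβ
      have hKle : orbCount (insert (Equiv.swap a (A a)) {A * Equiv.swap a (A a), β}) S
          ≤ orbCount {A, β} S := by
        apply orbCount_mono ?_ hS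
        rw [Subgroup.closure_le]
        rintro g hg
        rcases hg with hgA | hgβ
        · rw [hgA]
          have hα'mem : A * Equiv.swap a (A a)
              ∈ closure (insert (Equiv.swap a (A a)) {A * Equiv.swap a (A a), β}) :=
            Subgroup.subset_closure (Set.mem_insert_of_mem _ (Set.mem_insert _ _))
          have hτmem : Equiv.swap a (A a)
              ∈ closure (insert (Equiv.swap a (A a)) {A * Equiv.swap a (A a), β}) :=
            Subgroup.subset_closure (Set.mem_insert _ _)
          have hgoal : (A * Equiv.swap a (A a)) * Equiv.swap a (A a) = A := by
            rw [mul_assoc, hττ, mul_one]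
          have hmm := Subgroup.mul_mem _ hα'mem hτmem
          rwa [hgoal] at hmm
        · rw [Set.mem_singleton_iff] at hgβ
          rw [hgβ]
          exact Subgroup.subset_closure (Set.mem_insert_of_mem _ (Set.mem_insert_of_mem _ rfl))
      have hc'le : orbCount {A * Equiv.swap a (A a), β} S ≤ orbCount {A, β} S + 1 := by
        have := orbCount_le_insert_swap {A * Equiv.swap a (A a), β} hab hS ha hb
        omega
      by_cases hcc : orbCount {A * Equiv.swap a (A a), β} S ≤ orbCount {A, β} S
      · have hρbound : cyc (A⁻¹ * β) S ≤ cyc ((A * Equiv.swap a (A a))⁻¹ * β) S + 1 := by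
          by_cases hsc : (A⁻¹ * β).SameCycle a (A a)
          · have := cyc_swap_mul_split hS hρ ha hb hab hsc
            rw [← hρ'ρ] at this
            omega
          · have := cyc_swap_mul_merge hS hρ ha hb hab hsc
            rw [← hρ'ρ] at this
            omega
        omega
      · have hnot : A a ∉ orbG (closure {A * Equiv.swap a (A a), β}) a := by
          intro hmem
          have := orbCount_insert_swap_of_mem {A * Equiv.swap a (A a), β} hab hmem S
          omega
        have hρ'mem : (A * Equiv.swap a (A a))⁻¹ * β
            ∈ closure ({A * Equiv.swap a (A a), β} : Set (Equiv.Perm ℤ)) := by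
          apply Subgroup.mul_mem
          · exact Subgroup.inv_mem _ (Subgroup.subset_closure (Set.mem_insert _ _))
          · exact Subgroup.subset_closure (Set.mem_insert_of_mem _ rfl)
        have hnsc : ¬ ((A * Equiv.swap a (A a))⁻¹ * β).SameCycle a (A a) :=
          fun hsc => hnot (sameCycle_mem_orbG hρ'mem hsc)
        have hmerge := cyc_swap_mul_merge hS hρ' ha hb hab hnsc
        have hτρ' : Equiv.swap a (A a) * ((A * Equiv.swap a (A a))⁻¹ * β) = A⁻¹ * β := by
          rw [hρ'ρ, ← mul_assoc, hττ, one_mul]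
        rw [hτρ'] at hmerge
        omega

end Unrolling

namespace Unrolling

open Equiv Equiv.Perm

/-! ### Formulas for gammaZ and tgamma -/

lemma rot_apply (m : ℕ) (x : ℤ) :
    (((List.range m).map (fun i => Equiv.swap ((i : ℤ) + 1) ((i : ℤ) + 2))).prod) x =
      if 1 ≤ x ∧ x ≤ (m : ℤ) then x + 1 else if x = (m : ℤ) + 1 then 1 else x := by
  simp only [bind_pure_comp, Functor.map, List.map_map]
  induction m generalizing x with
  | zero =>
    simp only [List.range_zero, List.map_nil, List.prod_nil, Equiv.Perm.one_apply,
      Nat.cast_zero]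
    have : ¬ (1 ≤ x ∧ x ≤ (0 : ℤ)) := by omega
    rw [if_neg this]
    by_cases h1 : x = (0 : ℤ) + 1
    · rw [if_pos h1]; omega
    · rw [if_neg h1]
  | succ m ih =>
    rw [List.range_succ, List.map_append, List.prod_append, List.map_cons, List.map_nil,
      List.prod_cons, List.prod_nil, mul_one, Equiv.Perm.mul_apply]
    simp only [Function.comp_apply]
    by_cases hx1 : x = (m : ℤ) + 1
    · rw [hx1, Equiv.swap_apply_left, ih]
      split_ifs <;> push_cast at * <;> omega
    · by_cases hx2 : x = (m : ℤ) + 2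
      · rw [hx2, Equiv.swap_apply_right, ih]
        split_ifs <;> push_cast at * <;> omega
      · rw [Equiv.swap_apply_of_ne_of_ne hx1 hx2, ih]
        split_ifs <;> push_cast at * <;> omega

lemma gammaZ_apply (n : ℕ) (hn : 1 ≤ n) (x : ℤ) :
    gammaZ n x = if 1 ≤ x ∧ x ≤ (n : ℤ) - 1 then x + 1 else if x = (n : ℤ) then 1 else x := by
  unfold gammaZ
  rw [show (((List.range (n-1)).map (fun i => Equiv.swap ((i : ℤ) + 1) ((i : ℤ) + 2))).prod) x
    = if 1 ≤ x ∧ x ≤ ((n-1 : ℕ) : ℤ) then x + 1 else if x = ((n-1:ℕ) : ℤ) + 1 then 1 else x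
    from rot_apply (n-1) x]
  have hcast : ((n - 1 : ℕ) : ℤ) = (n : ℤ) - 1 := by
    push_cast [Nat.cast_sub hn]
    ring
  rw [hcast]
  split_ifs <;> omega

lemma gammaZ_fix (n : ℕ) (hn : 1 ≤ n) {x : ℤ} (h : ¬ (1 ≤ x ∧ x ≤ (n : ℤ))) :
    gammaZ n x = x := by
  rw [gammaZ_apply n hn]
  split_ifs <;> omega

lemma gammaZ_inv_fix (n : ℕ) (hn : 1 ≤ n) {x : ℤ} (h : ¬ (1 ≤ x ∧ x ≤ (n : ℤ))) :
    (gammaZ n)⁻¹ x = x := by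
  rw [Equiv.Perm.inv_eq_iff_eq]
  exact (gammaZ_fix n hn h).symm

lemma gammaZ_inv_apply (n : ℕ) (hn : 1 ≤ n) {y : ℤ} (h1 : 2 ≤ y) (h2 : y ≤ (n : ℤ)) :
    (gammaZ n)⁻¹ y = y - 1 := by
  rw [Equiv.Perm.inv_eq_iff_eq, gammaZ_apply n hn]
  rw [if_pos (by omega)]
  ring

lemma gammaZ_inv_one (n : ℕ) (hn : 1 ≤ n) : (gammaZ n)⁻¹ 1 = (n : ℤ) := by
  rw [Equiv.Perm.inv_eq_iff_eq, gammaZ_apply n hn]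
  split_ifs <;> omega

lemma deltaZ_apply (x : ℤ) : deltaZ x = -x := rfl

lemma tgamma_apply_eq (n : ℕ) (x : ℤ) :
    tgamma n x = gammaZ n (-((gammaZ n)⁻¹ (-x))) := by
  unfold tgamma
  rfl

lemma tgamma_apply_pos (n : ℕ) (hn : 1 ≤ n) {x : ℤ} (h1 : 1 ≤ x) (h2 : x ≤ (n : ℤ) - 1) :
    tgamma n x = x + 1 := by
  rw [tgamma_apply_eq, gammaZ_inv_fix n hn (by omega), neg_neg, gammaZ_apply n hn,
    if_pos ⟨h1, h2⟩]

lemma tgamma_apply_n (n : ℕ) (hn : 1 ≤ n) : tgamma n (n : ℤ) = 1 := by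
  rw [tgamma_apply_eq, gammaZ_inv_fix n hn (by omega), neg_neg, gammaZ_apply n hn]
  split_ifs <;> omega

lemma tgamma_apply_neg (n : ℕ) (hn : 1 ≤ n) {x : ℤ} (h1 : -(n : ℤ) ≤ x) (h2 : x ≤ -2) :
    tgamma n x = x + 1 := by
  rw [tgamma_apply_eq, gammaZ_inv_apply n hn (by omega) (by omega),
    gammaZ_fix n hn (by omega)]
  ring

lemma tgamma_apply_neg_one (n : ℕ) (hn : 1 ≤ n) : tgamma n (-1 : ℤ) = -(n : ℤ) := by
  rw [tgamma_apply_eq, neg_neg, gammaZ_inv_one n hn, gammaZ_fix n hn (by omega)]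

lemma tgamma_fix (n : ℕ) (hn : 1 ≤ n) {x : ℤ}
    (h : ¬ ((1 ≤ x ∧ x ≤ (n : ℤ)) ∨ (-(n : ℤ) ≤ x ∧ x ≤ -1))) :
    tgamma n x = x := by
  rw [tgamma_apply_eq, gammaZ_inv_fix n hn (by omega), neg_neg, gammaZ_fix n hn (by omega)]

lemma mem_Ipm_iff {n : ℕ} {x : ℤ} :
    x ∈ Ipm n ↔ (1 ≤ x ∧ x ≤ (n : ℤ)) ∨ (-(n : ℤ) ≤ x ∧ x ≤ -1) := by
  unfold Ipm
  simp only [Set.mem_setOf_eq]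
  rcases le_or_gt 0 x with h | h
  · rw [abs_of_nonneg h]; omega
  · rw [abs_of_neg h]; omega

lemma suppin_tgamma (n : ℕ) (hn : 1 ≤ n) : SuppIn (tgamma n) (Ipm n) := by
  intro x hx
  rw [mem_Ipm_iff] at hx
  exact tgamma_fix n hn hx

lemma Ipm_finite (n : ℕ) : (Ipm n).Finite := by
  apply (Set.finite_Icc (-(n : ℤ)) (n : ℤ)).subset
  intro x hx
  rw [mem_Ipm_iff] at hx
  simp only [Set.mem_Icc]
  omega

end Unrolling

namespace Unrolling

open Equiv Equiv.Perm

/-! ### Arithmetic progression segments and 3-segment lists -/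

def seg (c : ℤ) (m : ℕ) : List ℤ := (List.range m).map (fun i : ℕ => c + (i : ℤ))

lemma seg_length (c : ℤ) (m : ℕ) : (seg c m).length = m := by simp [seg]

lemma seg_getElem (c : ℤ) (m : ℕ) (i : ℕ) (h : i < m) :
    (seg c m)[i]'(by rw [seg_length]; exact h) = c + i := by
  simp [seg]

lemma mem_seg {c x : ℤ} {m : ℕ} : x ∈ seg c m ↔ c ≤ x ∧ x < c + m := by
  simp only [seg, List.mem_map, List.mem_range]
  constructor
  · rintro ⟨i, hi, rfl⟩; omega
  · rintro ⟨h1, h2⟩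
    refine ⟨(x - c).toNat, by omega, by omega⟩

lemma seg_nodup (c : ℤ) (m : ℕ) : (seg c m).Nodup := by
  apply List.Nodup.map
  · intro i j hij
    simp only at hij
    omega
  · exact List.nodup_range

def L3 (c1 : ℤ) (m1 : ℕ) (c2 : ℤ) (m2 : ℕ) (c3 : ℤ) (m3 : ℕ) : List ℤ :=
  seg c1 m1 ++ (seg c2 m2 ++ seg c3 m3)

lemma L3_length (c1 : ℤ) (m1 : ℕ) (c2 : ℤ) (m2 : ℕ) (c3 : ℤ) (m3 : ℕ) :
    (L3 c1 m1 c2 m2 c3 m3).length = m1 + m2 + m3 := by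
  simp [L3, seg_length]
  omega

lemma mem_L3 {c1 c2 c3 x : ℤ} {m1 m2 m3 : ℕ} :
    x ∈ L3 c1 m1 c2 m2 c3 m3 ↔
      (c1 ≤ x ∧ x < c1 + m1) ∨ (c2 ≤ x ∧ x < c2 + m2) ∨ (c3 ≤ x ∧ x < c3 + m3) := by
  simp [L3, List.mem_append, mem_seg]

lemma L3_nodup {c1 c2 c3 : ℤ} {m1 m2 m3 : ℕ}
    (h12 : ∀ x : ℤ, (c1 ≤ x ∧ x < c1 + m1) → (c2 ≤ x ∧ x < c2 + m2) → False)
    (h13 : ∀ x : ℤ, (c1 ≤ x ∧ x < c1 + m1) → (c3 ≤ x ∧ x < c3 + m3) → False)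
    (h23 : ∀ x : ℤ, (c2 ≤ x ∧ x < c2 + m2) → (c3 ≤ x ∧ x < c3 + m3) → False) :
    (L3 c1 m1 c2 m2 c3 m3).Nodup := by
  rw [L3, List.nodup_append', List.nodup_append']
  refine ⟨seg_nodup _ _, ⟨seg_nodup _ _, seg_nodup _ _, ?_⟩, ?_⟩
  · intro x hx hx'
    exact h23 x (mem_seg.mp hx) (mem_seg.mp hx')
  · intro x hx hx'
    rw [List.mem_append] at hx'
    rcases hx' with hx' | hx'
    · exact h12 x (mem_seg.mp hx) (mem_seg.mp hx')
    · exact h13 x (mem_seg.mp hx) (mem_seg.mp hx')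

lemma L3_get1 {c1 c2 c3 : ℤ} {m1 m2 m3 : ℕ} {i : ℕ} (h : i < m1) :
    (L3 c1 m1 c2 m2 c3 m3)[i]'(by rw [L3_length]; omega) = c1 + i := by
  unfold L3
  rw [List.getElem_append_left (by rw [seg_length]; exact h)]
  exact seg_getElem c1 m1 i h

lemma L3_get2 {c1 c2 c3 : ℤ} {m1 m2 m3 : ℕ} {idx i : ℕ} (hidx : idx = m1 + i) (h : i < m2) :
    (L3 c1 m1 c2 m2 c3 m3)[idx]'(by rw [L3_length]; omega) = c2 + i := by
  subst hidx
  unfold L3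
  rw [List.getElem_append_right (by rw [seg_length]; omega)]
  rw [List.getElem_append_left]
  · simp only [seg_length, show m1 + i - m1 = i from by omega]
    exact seg_getElem c2 m2 i h
  · simp only [seg_length, show m1 + i - m1 = i from by omega]
    exact h

lemma L3_get3 {c1 c2 c3 : ℤ} {m1 m2 m3 : ℕ} {idx i : ℕ} (hidx : idx = m1 + m2 + i)
    (h : i < m3) :
    (L3 c1 m1 c2 m2 c3 m3)[idx]'(by rw [L3_length]; omega) = c3 + i := by
  subst hidx
  unfold L3
  rw [List.getElem_append_right (by rw [seg_length]; omega)]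
  rw [List.getElem_append_right]
  · simp only [seg_length, show m1 + m2 + i - m1 - m2 = i from by omega]
    exact seg_getElem c3 m3 i h
  · simp only [seg_length]
    omega

lemma formPerm_step {L : List ℤ} (hnd : L.Nodup) (i : ℕ) (hi : i + 1 < L.length) :
    L.formPerm (L[i]'(by omega)) = L[i + 1]'hi := by
  rw [List.formPerm_apply_getElem _ hnd i (by omega)]
  congr 1
  exact Nat.mod_eq_of_lt (by omega)

lemma formPerm_eq_of_getElem {L : List ℤ} (hnd : L.Nodup) {i : ℕ} (hi : i + 1 < L.length)
    {x y : ℤ} (hx : L[i]'(by omega) = x) (hy : L[i + 1]'hi = y) : L.formPerm x = y := by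
  subst hx
  subst hy
  exact formPerm_step hnd i hi

lemma formPerm_wrap {L : List ℤ} (hnd : L.Nodup) (i : ℕ) (hi : i + 1 = L.length)
    (h0 : 0 < L.length) :
    L.formPerm (L[i]'(by omega)) = L[0]'h0 := by
  rw [List.formPerm_apply_getElem _ hnd i (by omega)]
  congr 1
  rw [hi, Nat.mod_self]

lemma formPerm_eq_of_getElem_wrap {L : List ℤ} (hnd : L.Nodup) {i : ℕ} (hi : i + 1 = L.length)
    {x y : ℤ} (hx : L[i]'(by omega) = x) (hy : L[0]'(by omega) = y) : L.formPerm x = y := by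
  subst hx
  subst hy
  exact formPerm_wrap hnd i hi (by omega)

end Unrolling

namespace Unrolling

open Equiv Equiv.Perm

/-! ### Value-level formPerm lemmas for 3-segment lists -/

section L3val

variable {c1 c2 c3 : ℤ} {m1 m2 m3 : ℕ}

lemma L3_formPerm_in1 (hnd : (L3 c1 m1 c2 m2 c3 m3).Nodup) {x : ℤ}
    (h1 : c1 ≤ x) (h2 : x + 1 < c1 + m1) :
    (L3 c1 m1 c2 m2 c3 m3).formPerm x = x + 1 := by
  have e1 : (L3 c1 m1 c2 m2 c3 m3)[(x - c1).toNat]'(by rw [L3_length]; omega) = x := by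
    rw [L3_get1 (by omega : (x - c1).toNat < m1)]; omega
  have e2 : (L3 c1 m1 c2 m2 c3 m3)[(x - c1).toNat + 1]'(by rw [L3_length]; omega) = x + 1 := by
    rw [L3_get1 (by omega : (x - c1).toNat + 1 < m1)]; omega
  exact formPerm_eq_of_getElem hnd (by rw [L3_length]; omega) e1 e2

lemma L3_formPerm_in2 (hnd : (L3 c1 m1 c2 m2 c3 m3).Nodup) {x : ℤ}
    (h1 : c2 ≤ x) (h2 : x + 1 < c2 + m2) :
    (L3 c1 m1 c2 m2 c3 m3).formPerm x = x + 1 := by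
  have e1 : (L3 c1 m1 c2 m2 c3 m3)[m1 + (x - c2).toNat]'(by rw [L3_length]; omega) = x := by
    rw [L3_get2 rfl (by omega : (x - c2).toNat < m2)]; omega
  have e2 : (L3 c1 m1 c2 m2 c3 m3)[m1 + (x - c2).toNat + 1]'(by rw [L3_length]; omega)
      = x + 1 := by
    rw [L3_get2 (by omega : m1 + (x - c2).toNat + 1 = m1 + ((x - c2).toNat + 1))
      (by omega : (x - c2).toNat + 1 < m2)]
    omega
  exact formPerm_eq_of_getElem hnd (by rw [L3_length]; omega) e1 e2

lemma L3_formPerm_in3 (hnd : (L3 c1 m1 c2 m2 c3 m3).Nodup) {x : ℤ}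
    (h1 : c3 ≤ x) (h2 : x + 1 < c3 + m3) :
    (L3 c1 m1 c2 m2 c3 m3).formPerm x = x + 1 := by
  have e1 : (L3 c1 m1 c2 m2 c3 m3)[m1 + m2 + (x - c3).toNat]'(by rw [L3_length]; omega)
      = x := by
    rw [L3_get3 rfl (by omega : (x - c3).toNat < m3)]; omega
  have e2 : (L3 c1 m1 c2 m2 c3 m3)[m1 + m2 + (x - c3).toNat + 1]'(by rw [L3_length]; omega)
      = x + 1 := by
    rw [L3_get3 (by omega : m1 + m2 + (x - c3).toNat + 1 = m1 + m2 + ((x - c3).toNat + 1))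
      (by omega : (x - c3).toNat + 1 < m3)]
    omega
  exact formPerm_eq_of_getElem hnd (by rw [L3_length]; omega) e1 e2

lemma L3_formPerm_1to2 (hnd : (L3 c1 m1 c2 m2 c3 m3).Nodup) (hm1 : 0 < m1) (hm2 : 0 < m2)
    {x : ℤ} (hx : x = c1 + m1 - 1) :
    (L3 c1 m1 c2 m2 c3 m3).formPerm x = c2 := by
  have e1 : (L3 c1 m1 c2 m2 c3 m3)[m1 - 1]'(by rw [L3_length]; omega) = x := by
    rw [L3_get1 (by omega : m1 - 1 < m1)]; omega
  have e2 : (L3 c1 m1 c2 m2 c3 m3)[m1 - 1 + 1]'(by rw [L3_length]; omega) = c2 := by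
    rw [L3_get2 (by omega : m1 - 1 + 1 = m1 + 0) (by omega : 0 < m2)]; omega
  exact formPerm_eq_of_getElem hnd (by rw [L3_length]; omega) e1 e2

lemma L3_formPerm_2to3 (hnd : (L3 c1 m1 c2 m2 c3 m3).Nodup) (hm2 : 0 < m2) (hm3 : 0 < m3)
    {x : ℤ} (hx : x = c2 + m2 - 1) :
    (L3 c1 m1 c2 m2 c3 m3).formPerm x = c3 := by
  have e1 : (L3 c1 m1 c2 m2 c3 m3)[m1 + (m2 - 1)]'(by rw [L3_length]; omega) = x := by
    rw [L3_get2 rfl (by omega : m2 - 1 < m2)]; omega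
  have e2 : (L3 c1 m1 c2 m2 c3 m3)[m1 + (m2 - 1) + 1]'(by rw [L3_length]; omega) = c3 := by
    rw [L3_get3 (by omega : m1 + (m2 - 1) + 1 = m1 + m2 + 0) (by omega : 0 < m3)]; omega
  exact formPerm_eq_of_getElem hnd (by rw [L3_length]; omega) e1 e2

lemma L3_formPerm_wrap_c1 (hnd : (L3 c1 m1 c2 m2 c3 m3).Nodup) (hm1 : 0 < m1) (hm3 : 0 < m3)
    {x : ℤ} (hx : x = c3 + m3 - 1) :
    (L3 c1 m1 c2 m2 c3 m3).formPerm x = c1 := by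
  have e1 : (L3 c1 m1 c2 m2 c3 m3)[m1 + m2 + (m3 - 1)]'(by rw [L3_length]; omega) = x := by
    rw [L3_get3 rfl (by omega : m3 - 1 < m3)]; omega
  have e0 : (L3 c1 m1 c2 m2 c3 m3)[0]'(by rw [L3_length]; omega) = c1 := by
    rw [L3_get1 (by omega : 0 < m1)]; omega
  exact formPerm_eq_of_getElem_wrap hnd (by rw [L3_length]; omega) e1 e0

lemma L3_formPerm_wrap_c2 (hnd : (L3 c1 m1 c2 m2 c3 m3).Nodup) (hm1 : m1 = 0) (hm2 : 0 < m2)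
    (hm3 : 0 < m3) {x : ℤ} (hx : x = c3 + m3 - 1) :
    (L3 c1 m1 c2 m2 c3 m3).formPerm x = c2 := by
  have e1 : (L3 c1 m1 c2 m2 c3 m3)[m1 + m2 + (m3 - 1)]'(by rw [L3_length]; omega) = x := by
    rw [L3_get3 rfl (by omega : m3 - 1 < m3)]; omega
  have e0 : (L3 c1 m1 c2 m2 c3 m3)[0]'(by rw [L3_length]; omega) = c2 := by
    rw [L3_get2 (by omega : 0 = m1 + 0) (by omega : 0 < m2)]; omega
  exact formPerm_eq_of_getElem_wrap hnd (by rw [L3_length]; omega) e1 e0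

lemma L3_formPerm_2wrap_c1 (hnd : (L3 c1 m1 c2 m2 c3 m3).Nodup) (hm3 : m3 = 0) (hm1 : 0 < m1)
    (hm2 : 0 < m2) {x : ℤ} (hx : x = c2 + m2 - 1) :
    (L3 c1 m1 c2 m2 c3 m3).formPerm x = c1 := by
  have e1 : (L3 c1 m1 c2 m2 c3 m3)[m1 + (m2 - 1)]'(by rw [L3_length]; omega) = x := by
    rw [L3_get2 rfl (by omega : m2 - 1 < m2)]; omega
  have e0 : (L3 c1 m1 c2 m2 c3 m3)[0]'(by rw [L3_length]; omega) = c1 := by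
    rw [L3_get1 (by omega : 0 < m1)]; omega
  exact formPerm_eq_of_getElem_wrap hnd (by rw [L3_length]; omega) e1 e0

lemma L3_formPerm_not_mem {x : ℤ} (h : x ∉ L3 c1 m1 c2 m2 c3 m3) :
    (L3 c1 m1 c2 m2 c3 m3).formPerm x = x :=
  List.formPerm_apply_of_notMem h

end L3val

/-! ### hatCycle lists as 3-segment lists -/

lemma hatCycle1_eq (n j k : ℕ) :
    hatCycle1 n j k = L3 1 (j - 1) (-(k : ℤ) + 1) (k - j) (k : ℤ) (n - k + 1) := by
  unfold hatCycle1 L3 seg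
  rw [List.append_assoc]
  simp only [bind_pure_comp, Functor.map, List.map_map]
  congr 1
  apply List.map_congr_left
  intro a _
  simp only [Function.comp_apply]
  ring

lemma hatCycle2_eq (n j k : ℕ) :
    hatCycle2 n j k = L3 (-(n : ℤ)) (n - k + 1) (j : ℤ) (k - j) (-(j : ℤ) + 1) (j - 1) := by
  unfold hatCycle2 L3 seg
  rw [List.append_assoc]
  simp only [bind_pure_comp, Functor.map, List.map_map]
  rfl

end Unrolling

namespace Unrolling

open Equiv Equiv.Perm

lemma part1 (n j k : ℕ) (hj : 1 ≤ j) (hjk : j < k) (hk : k ≤ n) :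
    tgamma n * Equiv.swap (-(j : ℤ)) ((gammaZ n)⁻¹ (k : ℤ)) *
        Equiv.swap (-(k : ℤ)) ((gammaZ n)⁻¹ (j : ℤ)) = hatGamma n j k := by
  have hn : 1 ≤ n := by omega
  have hnd1 : (L3 1 (j - 1) (-(k : ℤ) + 1) (k - j) (k : ℤ) (n - k + 1)).Nodup := by
    apply L3_nodup <;> (intro x h1 h2; omega)
  have hnd2 : (L3 (-(n : ℤ)) (n - k + 1) (j : ℤ) (k - j) (-(j : ℤ) + 1) (j - 1)).Nodup := by
    apply L3_nodup <;> (intro x h1 h2; omega)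
  have hik : (gammaZ n)⁻¹ (k : ℤ) = (k : ℤ) - 1 :=
    gammaZ_inv_apply n hn (by omega) (by omega)
  have hache : hatGamma n j k = (L3 1 (j - 1) (-(k : ℤ) + 1) (k - j) (k : ℤ) (n - k + 1)).formPerm * (L3 (-(n : ℤ)) (n - k + 1) (j : ℤ) (k - j) (-(j : ℤ) + 1) (j - 1)).formPerm := by
    unfold hatGamma
    rw [hatCycle1_eq, hatCycle2_eq]
  rcases eq_or_lt_of_le hj with hj1 | hj2
  · have hij : (gammaZ n)⁻¹ (j : ℤ) = (n : ℤ) := by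
      rw [show (j : ℤ) = 1 from by omega]
      exact gammaZ_inv_one n hn
    rw [hik, hij, hache]
    apply Equiv.ext
    intro x
    simp only [Equiv.Perm.mul_apply]
    by_cases hxc1 : x = -(k : ℤ)
    · have hs2 : Equiv.swap (-(k : ℤ)) ((n : ℤ)) x = (n : ℤ) := by rw [hxc1]; exact Equiv.swap_apply_left _ _
      have hs1 : Equiv.swap (-(j : ℤ)) ((k : ℤ) - 1) ((n : ℤ)) = (n : ℤ) := Equiv.swap_apply_of_ne_of_ne (by omega) (by omega)
      have htg : tgamma n ((n : ℤ)) = (1 : ℤ) := tgamma_apply_n n hn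
      have hf2 : (L3 (-(n : ℤ)) (n - k + 1) (j : ℤ) (k - j) (-(j : ℤ) + 1) (j - 1)).formPerm x = (j : ℤ) := L3_formPerm_1to2 hnd2 (by omega) (by omega) (by omega)
      have hf1 : (L3 1 (j - 1) (-(k : ℤ) + 1) (k - j) (k : ℤ) (n - k + 1)).formPerm ((j : ℤ)) = (j : ℤ) := L3_formPerm_not_mem (by rw [mem_L3]; omega)
      rw [hs2, hs1, htg, hf2, hf1]
      try omega
    by_cases hxc2 : x = (n : ℤ)
    · have hs2 : Equiv.swap (-(k : ℤ)) ((n : ℤ)) x = -(k : ℤ) := by rw [hxc2]; exact Equiv.swap_apply_right _ _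
      have hs1 : Equiv.swap (-(j : ℤ)) ((k : ℤ) - 1) (-(k : ℤ)) = -(k : ℤ) := Equiv.swap_apply_of_ne_of_ne (by omega) (by omega)
      have htg : tgamma n (-(k : ℤ)) = -(k : ℤ) + 1 := tgamma_apply_neg n hn (by omega) (by omega)
      have hf2 : (L3 (-(n : ℤ)) (n - k + 1) (j : ℤ) (k - j) (-(j : ℤ) + 1) (j - 1)).formPerm x = x := L3_formPerm_not_mem (by rw [mem_L3]; omega)
      have hf1 : (L3 1 (j - 1) (-(k : ℤ) + 1) (k - j) (k : ℤ) (n - k + 1)).formPerm (x) = -(k : ℤ) + 1 := L3_formPerm_wrap_c2 hnd1 (by omega) (by omega) (by omega) (by omega)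
      rw [hs2, hs1, htg, hf2, hf1]
      try omega
    by_cases hxc3 : x = -(j : ℤ)
    · have hs2 : Equiv.swap (-(k : ℤ)) ((n : ℤ)) x = x := Equiv.swap_apply_of_ne_of_ne (by omega) (by omega)
      have hs1 : Equiv.swap (-(j : ℤ)) ((k : ℤ) - 1) (x) = (k : ℤ) - 1 := by rw [hxc3]; exact Equiv.swap_apply_left _ _
      have htg : tgamma n ((k : ℤ) - 1) = (k : ℤ) - 1 + 1 := tgamma_apply_pos n hn (by omega) (by omega)
      have hf2 : (L3 (-(n : ℤ)) (n - k + 1) (j : ℤ) (k - j) (-(j : ℤ) + 1) (j - 1)).formPerm x = x := L3_formPerm_not_mem (by rw [mem_L3]; omega)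
      have hf1 : (L3 1 (j - 1) (-(k : ℤ) + 1) (k - j) (k : ℤ) (n - k + 1)).formPerm (x) = (k : ℤ) := L3_formPerm_2to3 hnd1 (by omega) (by omega) (by omega)
      rw [hs2, hs1, htg, hf2, hf1]
      try omega
    by_cases hxc4 : x = (k : ℤ) - 1
    · have hs2 : Equiv.swap (-(k : ℤ)) ((n : ℤ)) x = x := Equiv.swap_apply_of_ne_of_ne (by omega) (by omega)
      have hs1 : Equiv.swap (-(j : ℤ)) ((k : ℤ) - 1) (x) = -(j : ℤ) := by rw [hxc4]; exact Equiv.swap_apply_right _ _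
      have htg : tgamma n (-(j : ℤ)) = -(n : ℤ) := by rw [show -(j : ℤ) = -1 from by omega]; exact tgamma_apply_neg_one n hn
      have hf2 : (L3 (-(n : ℤ)) (n - k + 1) (j : ℤ) (k - j) (-(j : ℤ) + 1) (j - 1)).formPerm x = -(n : ℤ) := L3_formPerm_2wrap_c1 hnd2 (by omega) (by omega) (by omega) (by omega)
      have hf1 : (L3 1 (j - 1) (-(k : ℤ) + 1) (k - j) (k : ℤ) (n - k + 1)).formPerm (-(n : ℤ)) = -(n : ℤ) := L3_formPerm_not_mem (by rw [mem_L3]; omega)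
      rw [hs2, hs1, htg, hf2, hf1]
      try omega
    by_cases hxr0 : -(k : ℤ) + 1 ≤ x ∧ x ≤ -(j : ℤ) - 1
    · have hs2 : Equiv.swap (-(k : ℤ)) ((n : ℤ)) x = x := Equiv.swap_apply_of_ne_of_ne (by omega) (by omega)
      have hs1 : Equiv.swap (-(j : ℤ)) ((k : ℤ) - 1) (x) = x := Equiv.swap_apply_of_ne_of_ne (by omega) (by omega)
      have htg : tgamma n (x) = x + 1 := tgamma_apply_neg n hn (by omega) (by omega)
      have hf2 : (L3 (-(n : ℤ)) (n - k + 1) (j : ℤ) (k - j) (-(j : ℤ) + 1) (j - 1)).formPerm x = x := L3_formPerm_not_mem (by rw [mem_L3]; omega)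
      have hf1 : (L3 1 (j - 1) (-(k : ℤ) + 1) (k - j) (k : ℤ) (n - k + 1)).formPerm (x) = x + 1 := L3_formPerm_in2 hnd1 (by omega) (by omega)
      rw [hs2, hs1, htg, hf2, hf1]
      try omega
    by_cases hxr1 : (k : ℤ) ≤ x ∧ x ≤ (n : ℤ) - 1
    · have hs2 : Equiv.swap (-(k : ℤ)) ((n : ℤ)) x = x := Equiv.swap_apply_of_ne_of_ne (by omega) (by omega)
      have hs1 : Equiv.swap (-(j : ℤ)) ((k : ℤ) - 1) (x) = x := Equiv.swap_apply_of_ne_of_ne (by omega) (by omega)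
      have htg : tgamma n (x) = x + 1 := tgamma_apply_pos n hn (by omega) (by omega)
      have hf2 : (L3 (-(n : ℤ)) (n - k + 1) (j : ℤ) (k - j) (-(j : ℤ) + 1) (j - 1)).formPerm x = x := L3_formPerm_not_mem (by rw [mem_L3]; omega)
      have hf1 : (L3 1 (j - 1) (-(k : ℤ) + 1) (k - j) (k : ℤ) (n - k + 1)).formPerm (x) = x + 1 := L3_formPerm_in3 hnd1 (by omega) (by omega)
      rw [hs2, hs1, htg, hf2, hf1]
      try omega
    by_cases hxr2 : -(n : ℤ) ≤ x ∧ x ≤ -(k : ℤ) - 1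
    · have hs2 : Equiv.swap (-(k : ℤ)) ((n : ℤ)) x = x := Equiv.swap_apply_of_ne_of_ne (by omega) (by omega)
      have hs1 : Equiv.swap (-(j : ℤ)) ((k : ℤ) - 1) (x) = x := Equiv.swap_apply_of_ne_of_ne (by omega) (by omega)
      have htg : tgamma n (x) = x + 1 := tgamma_apply_neg n hn (by omega) (by omega)
      have hf2 : (L3 (-(n : ℤ)) (n - k + 1) (j : ℤ) (k - j) (-(j : ℤ) + 1) (j - 1)).formPerm x = x + 1 := L3_formPerm_in1 hnd2 (by omega) (by omega)
      have hf1 : (L3 1 (j - 1) (-(k : ℤ) + 1) (k - j) (k : ℤ) (n - k + 1)).formPerm (x + 1) = x + 1 := L3_formPerm_not_mem (by rw [mem_L3]; omega)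
      rw [hs2, hs1, htg, hf2, hf1]
      try omega
    by_cases hxr3 : (j : ℤ) ≤ x ∧ x ≤ (k : ℤ) - 2
    · have hs2 : Equiv.swap (-(k : ℤ)) ((n : ℤ)) x = x := Equiv.swap_apply_of_ne_of_ne (by omega) (by omega)
      have hs1 : Equiv.swap (-(j : ℤ)) ((k : ℤ) - 1) (x) = x := Equiv.swap_apply_of_ne_of_ne (by omega) (by omega)
      have htg : tgamma n (x) = x + 1 := tgamma_apply_pos n hn (by omega) (by omega)
      have hf2 : (L3 (-(n : ℤ)) (n - k + 1) (j : ℤ) (k - j) (-(j : ℤ) + 1) (j - 1)).formPerm x = x + 1 := L3_formPerm_in2 hnd2 (by omega) (by omega)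
      have hf1 : (L3 1 (j - 1) (-(k : ℤ) + 1) (k - j) (k : ℤ) (n - k + 1)).formPerm (x + 1) = x + 1 := L3_formPerm_not_mem (by rw [mem_L3]; omega)
      rw [hs2, hs1, htg, hf2, hf1]
      try omega
    · have hs2 : Equiv.swap (-(k : ℤ)) ((n : ℤ)) x = x := Equiv.swap_apply_of_ne_of_ne (by omega) (by omega)
      have hs1 : Equiv.swap (-(j : ℤ)) ((k : ℤ) - 1) x = x := Equiv.swap_apply_of_ne_of_ne (by omega) (by omega)
      have htg : tgamma n x = x := tgamma_fix n hn (by omega)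
      have hf2 : (L3 (-(n : ℤ)) (n - k + 1) (j : ℤ) (k - j) (-(j : ℤ) + 1) (j - 1)).formPerm x = x := L3_formPerm_not_mem (by rw [mem_L3]; omega)
      have hf1 : (L3 1 (j - 1) (-(k : ℤ) + 1) (k - j) (k : ℤ) (n - k + 1)).formPerm x = x := L3_formPerm_not_mem (by rw [mem_L3]; omega)
      rw [hs2, hs1, htg, hf2, hf1]

  · have hij : (gammaZ n)⁻¹ (j : ℤ) = (j : ℤ) - 1 :=
      gammaZ_inv_apply n hn (by omega) (by omega)
    rw [hik, hij, hache]
    apply Equiv.ext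
    intro x
    simp only [Equiv.Perm.mul_apply]
    by_cases hxc1 : x = -(k : ℤ)
    · have hs2 : Equiv.swap (-(k : ℤ)) ((j : ℤ) - 1) x = (j : ℤ) - 1 := by rw [hxc1]; exact Equiv.swap_apply_left _ _
      have hs1 : Equiv.swap (-(j : ℤ)) ((k : ℤ) - 1) ((j : ℤ) - 1) = (j : ℤ) - 1 := Equiv.swap_apply_of_ne_of_ne (by omega) (by omega)
      have htg : tgamma n ((j : ℤ) - 1) = (j : ℤ) - 1 + 1 := tgamma_apply_pos n hn (by omega) (by omega)
      have hf2 : (L3 (-(n : ℤ)) (n - k + 1) (j : ℤ) (k - j) (-(j : ℤ) + 1) (j - 1)).formPerm x = (j : ℤ) := L3_formPerm_1to2 hnd2 (by omega) (by omega) (by omega)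
      have hf1 : (L3 1 (j - 1) (-(k : ℤ) + 1) (k - j) (k : ℤ) (n - k + 1)).formPerm ((j : ℤ)) = (j : ℤ) := L3_formPerm_not_mem (by rw [mem_L3]; omega)
      rw [hs2, hs1, htg, hf2, hf1]
      try omega
    by_cases hxc2 : x = (j : ℤ) - 1
    · have hs2 : Equiv.swap (-(k : ℤ)) ((j : ℤ) - 1) x = -(k : ℤ) := by rw [hxc2]; exact Equiv.swap_apply_right _ _
      have hs1 : Equiv.swap (-(j : ℤ)) ((k : ℤ) - 1) (-(k : ℤ)) = -(k : ℤ) := Equiv.swap_apply_of_ne_of_ne (by omega) (by omega)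
      have htg : tgamma n (-(k : ℤ)) = -(k : ℤ) + 1 := tgamma_apply_neg n hn (by omega) (by omega)
      have hf2 : (L3 (-(n : ℤ)) (n - k + 1) (j : ℤ) (k - j) (-(j : ℤ) + 1) (j - 1)).formPerm x = x := L3_formPerm_not_mem (by rw [mem_L3]; omega)
      have hf1 : (L3 1 (j - 1) (-(k : ℤ) + 1) (k - j) (k : ℤ) (n - k + 1)).formPerm (x) = -(k : ℤ) + 1 := L3_formPerm_1to2 hnd1 (by omega) (by omega) (by omega)
      rw [hs2, hs1, htg, hf2, hf1]
      try omega
    by_cases hxc3 : x = -(j : ℤ)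
    · have hs2 : Equiv.swap (-(k : ℤ)) ((j : ℤ) - 1) x = x := Equiv.swap_apply_of_ne_of_ne (by omega) (by omega)
      have hs1 : Equiv.swap (-(j : ℤ)) ((k : ℤ) - 1) (x) = (k : ℤ) - 1 := by rw [hxc3]; exact Equiv.swap_apply_left _ _
      have htg : tgamma n ((k : ℤ) - 1) = (k : ℤ) - 1 + 1 := tgamma_apply_pos n hn (by omega) (by omega)
      have hf2 : (L3 (-(n : ℤ)) (n - k + 1) (j : ℤ) (k - j) (-(j : ℤ) + 1) (j - 1)).formPerm x = x := L3_formPerm_not_mem (by rw [mem_L3]; omega)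
      have hf1 : (L3 1 (j - 1) (-(k : ℤ) + 1) (k - j) (k : ℤ) (n - k + 1)).formPerm (x) = (k : ℤ) := L3_formPerm_2to3 hnd1 (by omega) (by omega) (by omega)
      rw [hs2, hs1, htg, hf2, hf1]
      try omega
    by_cases hxc4 : x = (k : ℤ) - 1
    · have hs2 : Equiv.swap (-(k : ℤ)) ((j : ℤ) - 1) x = x := Equiv.swap_apply_of_ne_of_ne (by omega) (by omega)
      have hs1 : Equiv.swap (-(j : ℤ)) ((k : ℤ) - 1) (x) = -(j : ℤ) := by rw [hxc4]; exact Equiv.swap_apply_right _ _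
      have htg : tgamma n (-(j : ℤ)) = -(j : ℤ) + 1 := tgamma_apply_neg n hn (by omega) (by omega)
      have hf2 : (L3 (-(n : ℤ)) (n - k + 1) (j : ℤ) (k - j) (-(j : ℤ) + 1) (j - 1)).formPerm x = -(j : ℤ) + 1 := L3_formPerm_2to3 hnd2 (by omega) (by omega) (by omega)
      have hf1 : (L3 1 (j - 1) (-(k : ℤ) + 1) (k - j) (k : ℤ) (n - k + 1)).formPerm (-(j : ℤ) + 1) = -(j : ℤ) + 1 := L3_formPerm_not_mem (by rw [mem_L3]; omega)
      rw [hs2, hs1, htg, hf2, hf1]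
      try omega
    by_cases hxc5 : x = (n : ℤ)
    · have hs2 : Equiv.swap (-(k : ℤ)) ((j : ℤ) - 1) x = x := Equiv.swap_apply_of_ne_of_ne (by omega) (by omega)
      have hs1 : Equiv.swap (-(j : ℤ)) ((k : ℤ) - 1) (x) = x := Equiv.swap_apply_of_ne_of_ne (by omega) (by omega)
      have htg : tgamma n (x) = (1 : ℤ) := by rw [hxc5]; exact tgamma_apply_n n hn
      have hf2 : (L3 (-(n : ℤ)) (n - k + 1) (j : ℤ) (k - j) (-(j : ℤ) + 1) (j - 1)).formPerm x = x := L3_formPerm_not_mem (by rw [mem_L3]; omega)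
      have hf1 : (L3 1 (j - 1) (-(k : ℤ) + 1) (k - j) (k : ℤ) (n - k + 1)).formPerm (x) = (1 : ℤ) := L3_formPerm_wrap_c1 hnd1 (by omega) (by omega) (by omega)
      rw [hs2, hs1, htg, hf2, hf1]
      try omega
    by_cases hxc6 : x = (-1 : ℤ)
    · have hs2 : Equiv.swap (-(k : ℤ)) ((j : ℤ) - 1) x = x := Equiv.swap_apply_of_ne_of_ne (by omega) (by omega)
      have hs1 : Equiv.swap (-(j : ℤ)) ((k : ℤ) - 1) (x) = x := Equiv.swap_apply_of_ne_of_ne (by omega) (by omega)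
      have htg : tgamma n (x) = -(n : ℤ) := by rw [hxc6]; exact tgamma_apply_neg_one n hn
      have hf2 : (L3 (-(n : ℤ)) (n - k + 1) (j : ℤ) (k - j) (-(j : ℤ) + 1) (j - 1)).formPerm x = -(n : ℤ) := L3_formPerm_wrap_c1 hnd2 (by omega) (by omega) (by omega)
      have hf1 : (L3 1 (j - 1) (-(k : ℤ) + 1) (k - j) (k : ℤ) (n - k + 1)).formPerm (-(n : ℤ)) = -(n : ℤ) := L3_formPerm_not_mem (by rw [mem_L3]; omega)
      rw [hs2, hs1, htg, hf2, hf1]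
      try omega
    by_cases hxr0 : 1 ≤ x ∧ x ≤ (j : ℤ) - 2
    · have hs2 : Equiv.swap (-(k : ℤ)) ((j : ℤ) - 1) x = x := Equiv.swap_apply_of_ne_of_ne (by omega) (by omega)
      have hs1 : Equiv.swap (-(j : ℤ)) ((k : ℤ) - 1) (x) = x := Equiv.swap_apply_of_ne_of_ne (by omega) (by omega)
      have htg : tgamma n (x) = x + 1 := tgamma_apply_pos n hn (by omega) (by omega)
      have hf2 : (L3 (-(n : ℤ)) (n - k + 1) (j : ℤ) (k - j) (-(j : ℤ) + 1) (j - 1)).formPerm x = x := L3_formPerm_not_mem (by rw [mem_L3]; omega)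
      have hf1 : (L3 1 (j - 1) (-(k : ℤ) + 1) (k - j) (k : ℤ) (n - k + 1)).formPerm (x) = x + 1 := L3_formPerm_in1 hnd1 (by omega) (by omega)
      rw [hs2, hs1, htg, hf2, hf1]
      try omega
    by_cases hxr1 : -(k : ℤ) + 1 ≤ x ∧ x ≤ -(j : ℤ) - 1
    · have hs2 : Equiv.swap (-(k : ℤ)) ((j : ℤ) - 1) x = x := Equiv.swap_apply_of_ne_of_ne (by omega) (by omega)
      have hs1 : Equiv.swap (-(j : ℤ)) ((k : ℤ) - 1) (x) = x := Equiv.swap_apply_of_ne_of_ne (by omega) (by omega)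
      have htg : tgamma n (x) = x + 1 := tgamma_apply_neg n hn (by omega) (by omega)
      have hf2 : (L3 (-(n : ℤ)) (n - k + 1) (j : ℤ) (k - j) (-(j : ℤ) + 1) (j - 1)).formPerm x = x := L3_formPerm_not_mem (by rw [mem_L3]; omega)
      have hf1 : (L3 1 (j - 1) (-(k : ℤ) + 1) (k - j) (k : ℤ) (n - k + 1)).formPerm (x) = x + 1 := L3_formPerm_in2 hnd1 (by omega) (by omega)
      rw [hs2, hs1, htg, hf2, hf1]
      try omega
    by_cases hxr2 : (k : ℤ) ≤ x ∧ x ≤ (n : ℤ) - 1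
    · have hs2 : Equiv.swap (-(k : ℤ)) ((j : ℤ) - 1) x = x := Equiv.swap_apply_of_ne_of_ne (by omega) (by omega)
      have hs1 : Equiv.swap (-(j : ℤ)) ((k : ℤ) - 1) (x) = x := Equiv.swap_apply_of_ne_of_ne (by omega) (by omega)
      have htg : tgamma n (x) = x + 1 := tgamma_apply_pos n hn (by omega) (by omega)
      have hf2 : (L3 (-(n : ℤ)) (n - k + 1) (j : ℤ) (k - j) (-(j : ℤ) + 1) (j - 1)).formPerm x = x := L3_formPerm_not_mem (by rw [mem_L3]; omega)
      have hf1 : (L3 1 (j - 1) (-(k : ℤ) + 1) (k - j) (k : ℤ) (n - k + 1)).formPerm (x) = x + 1 := L3_formPerm_in3 hnd1 (by omega) (by omega)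
      rw [hs2, hs1, htg, hf2, hf1]
      try omega
    by_cases hxr3 : -(n : ℤ) ≤ x ∧ x ≤ -(k : ℤ) - 1
    · have hs2 : Equiv.swap (-(k : ℤ)) ((j : ℤ) - 1) x = x := Equiv.swap_apply_of_ne_of_ne (by omega) (by omega)
      have hs1 : Equiv.swap (-(j : ℤ)) ((k : ℤ) - 1) (x) = x := Equiv.swap_apply_of_ne_of_ne (by omega) (by omega)
      have htg : tgamma n (x) = x + 1 := tgamma_apply_neg n hn (by omega) (by omega)
      have hf2 : (L3 (-(n : ℤ)) (n - k + 1) (j : ℤ) (k - j) (-(j : ℤ) + 1) (j - 1)).formPerm x = x + 1 := L3_formPerm_in1 hnd2 (by omega) (by omega)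
      have hf1 : (L3 1 (j - 1) (-(k : ℤ) + 1) (k - j) (k : ℤ) (n - k + 1)).formPerm (x + 1) = x + 1 := L3_formPerm_not_mem (by rw [mem_L3]; omega)
      rw [hs2, hs1, htg, hf2, hf1]
      try omega
    by_cases hxr4 : (j : ℤ) ≤ x ∧ x ≤ (k : ℤ) - 2
    · have hs2 : Equiv.swap (-(k : ℤ)) ((j : ℤ) - 1) x = x := Equiv.swap_apply_of_ne_of_ne (by omega) (by omega)
      have hs1 : Equiv.swap (-(j : ℤ)) ((k : ℤ) - 1) (x) = x := Equiv.swap_apply_of_ne_of_ne (by omega) (by omega)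
      have htg : tgamma n (x) = x + 1 := tgamma_apply_pos n hn (by omega) (by omega)
      have hf2 : (L3 (-(n : ℤ)) (n - k + 1) (j : ℤ) (k - j) (-(j : ℤ) + 1) (j - 1)).formPerm x = x + 1 := L3_formPerm_in2 hnd2 (by omega) (by omega)
      have hf1 : (L3 1 (j - 1) (-(k : ℤ) + 1) (k - j) (k : ℤ) (n - k + 1)).formPerm (x + 1) = x + 1 := L3_formPerm_not_mem (by rw [mem_L3]; omega)
      rw [hs2, hs1, htg, hf2, hf1]
      try omega
    by_cases hxr5 : -(j : ℤ) + 1 ≤ x ∧ x ≤ -2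
    · have hs2 : Equiv.swap (-(k : ℤ)) ((j : ℤ) - 1) x = x := Equiv.swap_apply_of_ne_of_ne (by omega) (by omega)
      have hs1 : Equiv.swap (-(j : ℤ)) ((k : ℤ) - 1) (x) = x := Equiv.swap_apply_of_ne_of_ne (by omega) (by omega)
      have htg : tgamma n (x) = x + 1 := tgamma_apply_neg n hn (by omega) (by omega)
      have hf2 : (L3 (-(n : ℤ)) (n - k + 1) (j : ℤ) (k - j) (-(j : ℤ) + 1) (j - 1)).formPerm x = x + 1 := L3_formPerm_in3 hnd2 (by omega) (by omega)
      have hf1 : (L3 1 (j - 1) (-(k : ℤ) + 1) (k - j) (k : ℤ) (n - k + 1)).formPerm (x + 1) = x + 1 := L3_formPerm_not_mem (by rw [mem_L3]; omega)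
      rw [hs2, hs1, htg, hf2, hf1]
      try omega
    · have hs2 : Equiv.swap (-(k : ℤ)) ((j : ℤ) - 1) x = x := Equiv.swap_apply_of_ne_of_ne (by omega) (by omega)
      have hs1 : Equiv.swap (-(j : ℤ)) ((k : ℤ) - 1) x = x := Equiv.swap_apply_of_ne_of_ne (by omega) (by omega)
      have htg : tgamma n x = x := tgamma_fix n hn (by omega)
      have hf2 : (L3 (-(n : ℤ)) (n - k + 1) (j : ℤ) (k - j) (-(j : ℤ) + 1) (j - 1)).formPerm x = x := L3_formPerm_not_mem (by rw [mem_L3]; omega)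
      have hf1 : (L3 1 (j - 1) (-(k : ℤ) + 1) (k - j) (k : ℤ) (n - k + 1)).formPerm x = x := L3_formPerm_not_mem (by rw [mem_L3]; omega)
      rw [hs2, hs1, htg, hf2, hf1]

end Unrolling

namespace Unrolling

open Equiv Equiv.Perm Subgroup

/-! ### Facts about the hat cycles -/

lemma formPerm_inv_mem {l : List ℤ} {x : ℤ} (hx : x ∈ l) : l.formPerm⁻¹ x ∈ l := by
  by_contra h
  have h1 : l.formPerm (l.formPerm⁻¹ x) = l.formPerm⁻¹ x := List.formPerm_apply_of_notMem h
  rw [← Equiv.Perm.mul_apply, mul_inv_cancel, Equiv.Perm.one_apply] at h1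
  rw [← h1] at h
  exact h hx

lemma formPerm_inv_apply_of_not_mem {l : List ℤ} {x : ℤ} (h : x ∉ l) :
    l.formPerm⁻¹ x = x := by
  rw [Equiv.Perm.inv_eq_iff_eq]
  exact (List.formPerm_apply_of_notMem h).symm

section hatfacts

variable {n j k : ℕ} (hj : 1 ≤ j) (hjk : j < k) (hk : k ≤ n)
include hj hjk hk

lemma mem_hc1 {x : ℤ} :
    x ∈ hatCycle1 n j k ↔ (1 ≤ x ∧ x ≤ (j : ℤ) - 1) ∨
      (-(k : ℤ) + 1 ≤ x ∧ x ≤ -(j : ℤ)) ∨ ((k : ℤ) ≤ x ∧ x ≤ (n : ℤ)) := by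
  rw [hatCycle1_eq, mem_L3]
  omega

lemma mem_hc2 {x : ℤ} :
    x ∈ hatCycle2 n j k ↔ (-(n : ℤ) ≤ x ∧ x ≤ -(k : ℤ)) ∨
      ((j : ℤ) ≤ x ∧ x ≤ (k : ℤ) - 1) ∨ (-(j : ℤ) + 1 ≤ x ∧ x ≤ -1) := by
  rw [hatCycle2_eq, mem_L3]
  omega

lemma hc_disjoint {x : ℤ} (h1 : x ∈ hatCycle1 n j k) (h2 : x ∈ hatCycle2 n j k) : False := by
  rw [mem_hc1 hj hjk hk] at h1
  rw [mem_hc2 hj hjk hk] at h2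
  omega

lemma Ipm_eq_hc {x : ℤ} : x ∈ Ipm n ↔ x ∈ hatCycle1 n j k ∨ x ∈ hatCycle2 n j k := by
  rw [mem_Ipm_iff, mem_hc1 hj hjk hk, mem_hc2 hj hjk hk]
  omega

lemma hc1_nodup : (hatCycle1 n j k).Nodup := by
  rw [hatCycle1_eq]
  apply L3_nodup <;> (intro x h1 h2; omega)

lemma hc2_nodup : (hatCycle2 n j k).Nodup := by
  rw [hatCycle2_eq]
  apply L3_nodup <;> (intro x h1 h2; omega)

lemma hc1_length : (hatCycle1 n j k).length = n := by
  rw [hatCycle1_eq, L3_length]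
  omega

lemma hc2_length : (hatCycle2 n j k).length = n := by
  rw [hatCycle2_eq, L3_length]
  omega

lemma suppin_hatGamma : SuppIn (hatGamma n j k) (Ipm n) := by
  intro x hx
  rw [Ipm_eq_hc hj hjk hk] at hx
  push_neg at hx
  unfold hatGamma
  rw [Equiv.Perm.mul_apply, List.formPerm_apply_of_notMem hx.2,
    List.formPerm_apply_of_notMem hx.1]

lemma hatGamma_commute :
    Commute (hatCycle1 n j k).formPerm (hatCycle2 n j k).formPerm := by
  apply Equiv.Perm.Disjoint.commute
  intro z
  by_cases hz : z ∈ hatCycle1 n j k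
  · exact Or.inr (List.formPerm_apply_of_notMem (fun h2 => hc_disjoint hj hjk hk hz h2))
  · exact Or.inl (List.formPerm_apply_of_notMem hz)

lemma orbP_hatGamma_1 {x : ℤ} (hx : x ∈ hatCycle1 n j k) :
    orbP (hatGamma n j k) x = {y : ℤ | y ∈ hatCycle1 n j k} := by
  apply Set.Subset.antisymm
  · apply orbP_subset hx
    intro y hy
    constructor
    · show hatGamma n j k y ∈ _
      unfold hatGamma
      rw [Equiv.Perm.mul_apply,
        List.formPerm_apply_of_notMem (fun h2 => hc_disjoint hj hjk hk hy h2)]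
      exact List.formPerm_apply_mem_of_mem hy
    · show (hatGamma n j k)⁻¹ y ∈ _
      unfold hatGamma
      rw [_root_.mul_inv_rev, Equiv.Perm.mul_apply]
      have h1 : (hatCycle1 n j k).formPerm⁻¹ y ∈ hatCycle1 n j k := formPerm_inv_mem hy
      rw [show (hatCycle1 n j k).formPerm⁻¹ y
          = (hatCycle2 n j k).formPerm⁻¹ ((hatCycle1 n j k).formPerm⁻¹ y) from
        (formPerm_inv_apply_of_not_mem (fun h2 => hc_disjoint hj hjk hk h1 h2)).symm] at h1
      exact h1
  · intro y hy
    rw [mem_orbP]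
    have hn2 : 2 ≤ (hatCycle1 n j k).length := by rw [hc1_length hj hjk hk]; omega
    have hnd := hc1_nodup hj hjk hk
    have hcyc := List.isCycle_formPerm hnd hn2
    have hsc : (hatCycle1 n j k).formPerm.SameCycle x y :=
      hcyc.sameCycle ((List.formPerm_apply_mem_ne_self_iff _ hnd _ hx).mpr hn2)
        ((List.formPerm_apply_mem_ne_self_iff _ hnd _ hy).mpr hn2)
    obtain ⟨i, hi⟩ := hsc
    refine ⟨i, ?_⟩
    show (hatGamma n j k ^ i) x = y
    unfold hatGamma
    rw [(hatGamma_commute hj hjk hk).mul_zpow, Equiv.Perm.mul_apply,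
      Equiv.Perm.zpow_apply_eq_self_of_apply_eq_self
        (List.formPerm_apply_of_notMem (fun h2 => hc_disjoint hj hjk hk hx h2)), hi]

lemma orbP_hatGamma_2 {x : ℤ} (hx : x ∈ hatCycle2 n j k) :
    orbP (hatGamma n j k) x = {y : ℤ | y ∈ hatCycle2 n j k} := by
  apply Set.Subset.antisymm
  · apply orbP_subset hx
    intro y hy
    have hyn1 : y ∉ hatCycle1 n j k := fun h1 => hc_disjoint hj hjk hk h1 hy
    constructor
    · show hatGamma n j k y ∈ _
      unfold hatGamma
      have h2 : (hatCycle2 n j k).formPerm y ∈ hatCycle2 n j k :=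
        List.formPerm_apply_mem_of_mem hy
      rw [Equiv.Perm.mul_apply,
        List.formPerm_apply_of_notMem (fun h1 => hc_disjoint hj hjk hk h1 h2)]
      exact h2
    · show (hatGamma n j k)⁻¹ y ∈ _
      unfold hatGamma
      rw [_root_.mul_inv_rev, Equiv.Perm.mul_apply,
        formPerm_inv_apply_of_not_mem hyn1]
      exact formPerm_inv_mem hy
  · intro y hy
    rw [mem_orbP]
    have hn2 : 2 ≤ (hatCycle2 n j k).length := by rw [hc2_length hj hjk hk]; omega
    have hnd := hc2_nodup hj hjk hk
    have hcyc := List.isCycle_formPerm hnd hn2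
    have hsc : (hatCycle2 n j k).formPerm.SameCycle x y :=
      hcyc.sameCycle ((List.formPerm_apply_mem_ne_self_iff _ hnd _ hx).mpr hn2)
        ((List.formPerm_apply_mem_ne_self_iff _ hnd _ hy).mpr hn2)
    obtain ⟨i, hi⟩ := hsc
    refine ⟨i, ?_⟩
    show (hatGamma n j k ^ i) x = y
    unfold hatGamma
    rw [(hatGamma_commute hj hjk hk).mul_zpow, Equiv.Perm.mul_apply, hi,
      Equiv.Perm.zpow_apply_eq_self_of_apply_eq_self
        (List.formPerm_apply_of_notMem (fun h1 => hc_disjoint hj hjk hk h1 hy))]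

lemma part2 : cyc (hatGamma n j k) (Ipm n) = 2 := by
  rw [cyc_eq]
  have hkmem1 : (k : ℤ) ∈ hatCycle1 n j k := by rw [mem_hc1 hj hjk hk]; omega
  have hmkmem2 : -(k : ℤ) ∈ hatCycle2 n j k := by rw [mem_hc2 hj hjk hk]; omega
  have himg : orbP (hatGamma n j k) '' (Ipm n)
      = {{y : ℤ | y ∈ hatCycle1 n j k}, {y : ℤ | y ∈ hatCycle2 n j k}} := by
    apply Set.Subset.antisymm
    · rintro O ⟨x, hx, rfl⟩
      rw [Ipm_eq_hc hj hjk hk] at hx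
      rcases hx with hx | hx
      · exact Or.inl (orbP_hatGamma_1 hj hjk hk hx)
      · exact Or.inr (orbP_hatGamma_2 hj hjk hk hx)
    · rintro O hO
      rcases hO with rfl | hO
      · exact ⟨(k : ℤ), (Ipm_eq_hc hj hjk hk).mpr (Or.inl hkmem1),
          orbP_hatGamma_1 hj hjk hk hkmem1⟩
      · rw [Set.mem_singleton_iff] at hO
        subst hO
        exact ⟨-(k : ℤ), (Ipm_eq_hc hj hjk hk).mpr (Or.inr hmkmem2),
          orbP_hatGamma_2 hj hjk hk hmkmem2⟩
  rw [himg, Set.ncard_pair]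
  intro heq
  have : (k : ℤ) ∈ {y : ℤ | y ∈ hatCycle2 n j k} := by rw [← heq]; exact hkmem1
  exact hc_disjoint hj hjk hk hkmem1 this

lemma ncard_Ipm : (Ipm n).ncard = 2 * n := by
  have hun : Ipm n = {y : ℤ | y ∈ hatCycle1 n j k} ∪ {y : ℤ | y ∈ hatCycle2 n j k} :=
    Set.ext fun x => Ipm_eq_hc hj hjk hk
  have hset1 : {y : ℤ | y ∈ hatCycle1 n j k} = ((hatCycle1 n j k).toFinset : Set ℤ) := by
    rw [List.coe_toFinset]
  have hset2 : {y : ℤ | y ∈ hatCycle2 n j k} = ((hatCycle2 n j k).toFinset : Set ℤ) := by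
    rw [List.coe_toFinset]
  rw [hun, Set.ncard_union_eq ?_ ?_ ?_]
  · rw [hset1, hset2, Set.ncard_coe_finset, Set.ncard_coe_finset,
      List.toFinset_card_of_nodup (hc1_nodup hj hjk hk),
      List.toFinset_card_of_nodup (hc2_nodup hj hjk hk),
      hc1_length hj hjk hk, hc2_length hj hjk hk]
    omega
  · rw [Set.disjoint_left]
    intro x hx1 hx2
    exact hc_disjoint hj hjk hk hx1 hx2
  · rw [hset1]; exact (hatCycle1 n j k).toFinset.finite_toSet
  · rw [hset2]; exact (hatCycle2 n j k).toFinset.finite_toSet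

lemma orbCount_one_of_cross (p : Equiv.Perm ℤ) {x0 : ℤ}
    (hx0 : x0 ∈ hatCycle1 n j k) (hp : p x0 ∈ hatCycle2 n j k) :
    orbCount {p, hatGamma n j k} (Ipm n) = 1 := by
  have hγH : hatGamma n j k ∈ closure ({p, hatGamma n j k} : Set (Equiv.Perm ℤ)) :=
    Subgroup.subset_closure (Set.mem_insert_of_mem _ rfl)
  have hpH : p ∈ closure ({p, hatGamma n j k} : Set (Equiv.Perm ℤ)) :=
    Subgroup.subset_closure (Set.mem_insert _ _)
  have hcov : ∀ y ∈ Ipm n, y ∈ orbG (closure ({p, hatGamma n j k} : Set (Equiv.Perm ℤ))) x0 := by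
    intro y hy
    rw [Ipm_eq_hc hj hjk hk] at hy
    rcases hy with hy | hy
    · have hsc : (hatGamma n j k).SameCycle x0 y := by
        rw [← mem_orbP, orbP_hatGamma_1 hj hjk hk hx0]
        exact hy
      exact sameCycle_mem_orbG hγH hsc
    · have hpx : p x0 ∈ orbG (closure ({p, hatGamma n j k} : Set (Equiv.Perm ℤ))) x0 :=
        apply_mem_orbG hpH (mem_orbG_self _ x0)
      have hsc : (hatGamma n j k).SameCycle (p x0) y := by
        rw [← mem_orbP, orbP_hatGamma_2 hj hjk hk hp]
        exact hy
      have h2 := sameCycle_mem_orbG hγH hsc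
      rw [orbG_eq_of_mem hpx] at h2
      exact h2
  rw [orbCount_eq']
  have himg : orbG (closure ({p, hatGamma n j k} : Set (Equiv.Perm ℤ))) '' (Ipm n)
      = {orbG (closure ({p, hatGamma n j k} : Set (Equiv.Perm ℤ))) x0} := by
    apply Set.Subset.antisymm
    · rintro O ⟨y, hy, rfl⟩
      rw [Set.mem_singleton_iff]
      exact orbG_eq_of_mem (hcov y hy)
    · rintro O hO
      rw [Set.mem_singleton_iff] at hO
      subst hO
      exact ⟨x0, (Ipm_eq_hc hj hjk hk).mpr (Or.inl hx0), rfl⟩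
  rw [himg, Set.ncard_singleton]

lemma orbCount_one_of_cross' (p : Equiv.Perm ℤ) {x0 : ℤ}
    (hx0 : x0 ∈ hatCycle2 n j k) (hp : p x0 ∈ hatCycle1 n j k) :
    orbCount {p, hatGamma n j k} (Ipm n) = 1 := by
  have hγH : hatGamma n j k ∈ closure ({p, hatGamma n j k} : Set (Equiv.Perm ℤ)) :=
    Subgroup.subset_closure (Set.mem_insert_of_mem _ rfl)
  have hpH : p ∈ closure ({p, hatGamma n j k} : Set (Equiv.Perm ℤ)) :=
    Subgroup.subset_closure (Set.mem_insert _ _)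
  have hcov : ∀ y ∈ Ipm n, y ∈ orbG (closure ({p, hatGamma n j k} : Set (Equiv.Perm ℤ))) x0 := by
    intro y hy
    rw [Ipm_eq_hc hj hjk hk] at hy
    rcases hy with hy | hy
    · have hpx : p x0 ∈ orbG (closure ({p, hatGamma n j k} : Set (Equiv.Perm ℤ))) x0 :=
        apply_mem_orbG hpH (mem_orbG_self _ x0)
      have hsc : (hatGamma n j k).SameCycle (p x0) y := by
        rw [← mem_orbP, orbP_hatGamma_1 hj hjk hk hp]
        exact hy
      have h2 := sameCycle_mem_orbG hγH hsc
      rw [orbG_eq_of_mem hpx] at h2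
      exact h2
    · have hsc : (hatGamma n j k).SameCycle x0 y := by
        rw [← mem_orbP, orbP_hatGamma_2 hj hjk hk hx0]
        exact hy
      exact sameCycle_mem_orbG hγH hsc
  rw [orbCount_eq']
  have himg : orbG (closure ({p, hatGamma n j k} : Set (Equiv.Perm ℤ))) '' (Ipm n)
      = {orbG (closure ({p, hatGamma n j k} : Set (Equiv.Perm ℤ))) x0} := by
    apply Set.Subset.antisymm
    · rintro O ⟨y, hy, rfl⟩
      rw [Set.mem_singleton_iff]
      exact orbG_eq_of_mem (hcov y hy)
    · rintro O hO
      rw [Set.mem_singleton_iff] at hO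
      subst hO
      exact ⟨x0, (Ipm_eq_hc hj hjk hk).mpr (Or.inr hx0), rfl⟩
  rw [himg, Set.ncard_singleton]

end hatfacts

end Unrolling


/-- unrolling the annulus. -/

theorem unrolling_the_annulus
    (n : ℕ) (hn : 1 ≤ n) (π : Equiv.Perm ℤ) (hπ : π ∈ SNCdelta n)
    (j k : ℕ) (hj : 1 ≤ j) (hjk : j < k) (hk : k ≤ n)
    (hpi : π⁻¹ (j : ℤ) = -(k : ℤ)) :
    tgamma n * Equiv.swap (-(j : ℤ)) ((gammaZ n)⁻¹ (k : ℤ)) *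
        Equiv.swap (-(k : ℤ)) ((gammaZ n)⁻¹ (j : ℤ)) = hatGamma n j k ∧
    cyc (hatGamma n j k) (Ipm n) = 2 ∧
    (∀ x ∈ hatCycle1 n j k, π x ∈ hatCycle1 n j k) ∧
    (∀ x ∈ hatCycle2 n j k, π x ∈ hatCycle2 n j k) ∧
    cyc π (Ipm n) + cyc (π⁻¹ * hatGamma n j k) (Ipm n) = 2 * n + 2 := by
  classical
  obtain ⟨⟨hsupp, htrans, hsum⟩, hpair⟩ := hπ
  have hn2 : 2 ≤ n := by omega
  have hS : (Ipm n).Finite := Unrolling.Ipm_finite n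
  have hpart1 := Unrolling.part1 n j k hj hjk hk
  have hpart2 := Unrolling.part2 hj hjk hk
  have hπmk : π (-(k : ℤ)) = (j : ℤ) := by
    rw [← hpi, ← Equiv.Perm.mul_apply, mul_inv_cancel, Equiv.Perm.one_apply]
  have hkIpm : (k : ℤ) ∈ Ipm n := by rw [Unrolling.mem_Ipm_iff]; omega
  have hπmj : π (-(j : ℤ)) = (k : ℤ) := by
    have hp2 := (hpair (k : ℤ) hkIpm).2
    simp only [Equiv.Perm.mul_apply, Unrolling.deltaZ_apply] at hp2
    rw [hπmk] at hp2
    exact hp2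
  have hπik : π⁻¹ (k : ℤ) = -(j : ℤ) := by rw [← hπmj, ← Equiv.Perm.mul_apply, inv_mul_cancel, Equiv.Perm.one_apply]
  have hsuppα : SuppIn (π⁻¹ * tgamma n) (Ipm n) :=
    Unrolling.suppin_mul (Unrolling.suppin_inv hsupp) (Unrolling.suppin_tgamma n (by omega))
  have hγik : (gammaZ n)⁻¹ (k : ℤ) = (k : ℤ) - 1 :=
    Unrolling.gammaZ_inv_apply n (by omega) (by omega) (by omega)
  have hαk1 : (π⁻¹ * tgamma n) ((k : ℤ) - 1) = -(j : ℤ) := by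
    rw [Equiv.Perm.mul_apply, Unrolling.tgamma_apply_pos n (by omega) (by omega) (by omega),
      show (k : ℤ) - 1 + 1 = (k : ℤ) from by ring, hπik]
  have hj'facts : (1 ≤ (gammaZ n)⁻¹ (j : ℤ) ∧ (gammaZ n)⁻¹ (j : ℤ) ≤ (n : ℤ))
      ∧ (gammaZ n)⁻¹ (j : ℤ) ≠ (k : ℤ) - 1 := by
    rcases eq_or_lt_of_le hj with hj1 | hj2
    · rw [show (j : ℤ) = 1 from by omega, Unrolling.gammaZ_inv_one n (by omega)]
      omega
    · rw [Unrolling.gammaZ_inv_apply n (by omega) (by omega) (by omega)]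
      omega
  have hαj' : (π⁻¹ * tgamma n) ((gammaZ n)⁻¹ (j : ℤ)) = -(k : ℤ) := by
    rcases eq_or_lt_of_le hj with hj1 | hj2
    · rw [show (j : ℤ) = 1 from by omega, Unrolling.gammaZ_inv_one n (by omega),
        Equiv.Perm.mul_apply, Unrolling.tgamma_apply_n n (by omega),
        show (1 : ℤ) = (j : ℤ) from by omega, hpi]
    · rw [Unrolling.gammaZ_inv_apply n (by omega) (by omega) (by omega),
        Equiv.Perm.mul_apply, Unrolling.tgamma_apply_pos n (by omega) (by omega) (by omega),
        show (j : ℤ) - 1 + 1 = (j : ℤ) from by ring, hpi]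
  have hmjIpm : -(j : ℤ) ∈ Ipm n := by rw [Unrolling.mem_Ipm_iff]; omega
  have hk1Ipm : (k : ℤ) - 1 ∈ Ipm n := by rw [Unrolling.mem_Ipm_iff]; omega
  have hsc1 : (π⁻¹ * tgamma n).SameCycle (-(j : ℤ)) ((k : ℤ) - 1) :=
    Equiv.Perm.SameCycle.symm ⟨1, by rw [zpow_one]; exact hαk1⟩
  have hstep1 : cyc ((π⁻¹ * tgamma n) * Equiv.swap (-(j : ℤ)) ((k : ℤ) - 1)) (Ipm n)
      = cyc (π⁻¹ * tgamma n) (Ipm n) + 1 :=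
    Unrolling.cyc_mul_swap_split hS hsuppα hmjIpm hk1Ipm (by omega) hsc1
  have hsuppβ1 : SuppIn ((π⁻¹ * tgamma n) * Equiv.swap (-(j : ℤ)) ((k : ℤ) - 1)) (Ipm n) :=
    Unrolling.suppin_mul hsuppα (Unrolling.suppin_swap hmjIpm hk1Ipm)
  have hβ1j' : ((π⁻¹ * tgamma n) * Equiv.swap (-(j : ℤ)) ((k : ℤ) - 1)) ((gammaZ n)⁻¹ (j : ℤ))
      = -(k : ℤ) := by
    rw [Equiv.Perm.mul_apply,
      Equiv.swap_apply_of_ne_of_ne (by omega) hj'facts.2, hαj']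
  have hmkIpm : -(k : ℤ) ∈ Ipm n := by rw [Unrolling.mem_Ipm_iff]; omega
  have hj'Ipm : (gammaZ n)⁻¹ (j : ℤ) ∈ Ipm n := by rw [Unrolling.mem_Ipm_iff]; omega
  have hsc2 : ((π⁻¹ * tgamma n) * Equiv.swap (-(j : ℤ)) ((k : ℤ) - 1)).SameCycle
      (-(k : ℤ)) ((gammaZ n)⁻¹ (j : ℤ)) :=
    Equiv.Perm.SameCycle.symm ⟨1, by rw [zpow_one]; exact hβ1j'⟩
  have hstep2 : cyc (((π⁻¹ * tgamma n) * Equiv.swap (-(j : ℤ)) ((k : ℤ) - 1))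
        * Equiv.swap (-(k : ℤ)) ((gammaZ n)⁻¹ (j : ℤ))) (Ipm n)
      = cyc ((π⁻¹ * tgamma n) * Equiv.swap (-(j : ℤ)) ((k : ℤ) - 1)) (Ipm n) + 1 :=
    Unrolling.cyc_mul_swap_split hS hsuppβ1 hmkIpm hj'Ipm (by omega) hsc2
  have hexp : π⁻¹ * hatGamma n j k
      = ((π⁻¹ * tgamma n) * Equiv.swap (-(j : ℤ)) ((k : ℤ) - 1))
        * Equiv.swap (-(k : ℤ)) ((gammaZ n)⁻¹ (j : ℤ)) := by
    rw [← hpart1, hγik]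
    simp only [mul_assoc]
  have hpart5 : cyc π (Ipm n) + cyc (π⁻¹ * hatGamma n j k) (Ipm n) = 2 * n + 2 := by
    rw [hexp, hstep2, hstep1]
    omega
  have hsuppγ := Unrolling.suppin_hatGamma hj hjk hk
  have hncard := Unrolling.ncard_Ipm hj hjk hk
  have hpart3 : ∀ x ∈ hatCycle1 n j k, π x ∈ hatCycle1 n j k := by
    intro x hx
    by_contra hxc
    have hπx : π x ∈ Ipm n :=
      Unrolling.suppin_apply_mem hsupp ((Unrolling.Ipm_eq_hc hj hjk hk).mpr (Or.inl hx))
    have hx2 : π x ∈ hatCycle2 n j k := by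
      rw [Unrolling.Ipm_eq_hc hj hjk hk] at hπx
      tauto
    have heuler := Unrolling.euler_ineq hS hsuppγ hsupp
    have hjoin := Unrolling.orbCount_one_of_cross hj hjk hk π hx hx2
    rw [hjoin, hpart2, hncard] at heuler
    omega
  have hpart4 : ∀ x ∈ hatCycle2 n j k, π x ∈ hatCycle2 n j k := by
    intro x hx
    by_contra hxc
    have hπx : π x ∈ Ipm n :=
      Unrolling.suppin_apply_mem hsupp ((Unrolling.Ipm_eq_hc hj hjk hk).mpr (Or.inr hx))
    have hx1 : π x ∈ hatCycle1 n j k := by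
      rw [Unrolling.Ipm_eq_hc hj hjk hk] at hπx
      tauto
    have heuler := Unrolling.euler_ineq hS hsuppγ hsupp
    have hjoin := Unrolling.orbCount_one_of_cross' hj hjk hk π hx hx1
    rw [hjoin, hpart2, hncard] at heuler
    omega
  exact ⟨hpart1, hpart2, hpart3, hpart4, hpart5⟩


end
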